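/- arXiv:0811.4087 — 6 statements merged into one kernel-verified Lean document; each statement's English description precedes it below -/
import Mathlib

section
/- For every n ≥ 1, every associative (unital) ring A, and every family of elements x_1, …, x_n ∈ A, the left-iterated Lie bracket satisfies […[[x_1, x_2], x_3], …, x_n] = Σ_{i=0}^{n−1} (−1)^i Σ_{σ ∈ S_n, Desc(σ) = {1,…,i}} x_{σ(1)} x_{σ(2)} ⋯ x_{σ(n)}, where [x,y] := xy − yx. Equivalently, the Dynkin element 𝒟_n := Σ_{i=0}^{n−1} (−1)^i D_{={1,…,i}}^{(n)} realizes the iterated bracketing: x_1⋯x_n · 𝒟_n = […[x_1, x_2], …, x_n], where the symmetric group acts on the right by x_1⋯x_n · σ := x_{σ(1)}⋯x_{σ(n)}. -/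
open Classical in
/-- The descent set of a permutation `σ ∈ S_n` (1-based convention):
`Desc(σ) = {i ∈ {1,…,n−1} : σ(i) > σ(i+1)}`, where, 0-based, the 1-based value
`σ(i)` is `σ ⟨i-1⟩`. -/
noncomputable def descSet {n : ℕ} (σ : Equiv.Perm (Fin n)) : Finset ℕ :=
  (Finset.Ioo 0 n).filter
    (fun i => ∃ h : i < n, σ ⟨i, h⟩ < σ ⟨i - 1, lt_of_le_of_lt (Nat.sub_le i 1) h⟩)

/-- The left-iterated Lie bracket `[...[[x₁,x₂],x₃],…,xₙ]` of a list of elements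
of an associative ring, with `[x,y] = xy - yx`. -/
def iterBracket {A : Type*} [Ring A] : List A → A
  | [] => 0
  | [a] => a
  | a :: b :: l => iterBracket ((a * b - b * a) :: l)

/-!
Expanding the brackets one at a time,
`[…[[a, b₁], b₂], …, b_k] = ∑ (-1)^|u| (u reversed) · a · v`, summed over the ways `(u, v)` of
distributing `b₁ … b_k` into two complementary subsequences. With `a = x₁`, the index word
`(u reversed) 1 v` is a permutation that descends exactly at its first `|u|` positions and ascends
afterwards, a valley at the letter `1`. Conversely a permutation with descent set `{1, …, i}` is
such a valley: its minimum `1` sits at position `i + 1`, and the letters before and after it form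
an unshuffle of `2, …, n`. Matching the terms gives the Dynkin formula. (Indices are 0-based
below: the letter `1` is `0 : Fin n`.)
-/

def unshuffles {α : Type*} : List α → List (List α × List α)
  | [] => [([], [])]
  | b :: l => (unshuffles l).map (fun p => (b :: p.1, p.2)) ++
      (unshuffles l).map (fun p => (p.1, b :: p.2))

section Unshuffles
variable {α β : Type*}

theorem unshuffles_map (f : α → β) (l : List α) :
    unshuffles (l.map f) = (unshuffles l).map (Prod.map (List.map f) (List.map f)) := by
  induction l with
  | nil => rfl
  | cons b l ih => simp [unshuffles, ih, Function.comp_def]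

theorem perm_of_mem_unshuffles {l : List α} {p : List α × List α} (hp : p ∈ unshuffles l) :
    (p.1 ++ p.2).Perm l := by
  induction l generalizing p with
  | nil => simp_all [unshuffles]
  | cons b l ih =>
    simp only [unshuffles, List.mem_append, List.mem_map] at hp
    rcases hp with ⟨q, hq, rfl⟩ | ⟨q, hq, rfl⟩
    · exact (ih hq).cons b
    · exact List.perm_middle.trans ((ih hq).cons b)

theorem sublist_of_mem_unshuffles {l : List α} {p : List α × List α} (hp : p ∈ unshuffles l) :
    p.1.Sublist l ∧ p.2.Sublist l := by
  induction l generalizing p with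
  | nil => simp_all [unshuffles]
  | cons b l ih =>
    simp only [unshuffles, List.mem_append, List.mem_map] at hp
    rcases hp with ⟨q, hq, rfl⟩ | ⟨q, hq, rfl⟩
    · exact ⟨(ih hq).1.cons_cons b, (ih hq).2.cons b⟩
    · exact ⟨(ih hq).1.cons b, (ih hq).2.cons_cons b⟩

theorem nodup_unshuffles {l : List α} (hl : l.Nodup) : (unshuffles l).Nodup := by
  induction l with
  | nil => simp [unshuffles]
  | cons b l ih =>
    rw [List.nodup_cons] at hl
    refine (ih hl.2).map (fun p q h => by simpa [Prod.ext_iff] using h) |>.append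
      ((ih hl.2).map (fun p q h => by simpa [Prod.ext_iff] using h)) ?_
    -- `b` lies in the first component of the left pairs only
    intro _ hleft hright
    obtain ⟨p, -, rfl⟩ := List.mem_map.mp hleft
    obtain ⟨q, hq, h⟩ := List.mem_map.mp hright
    rw [Prod.ext_iff] at h
    exact hl.1 ((sublist_of_mem_unshuffles hq).1.subset (h.1 ▸ List.mem_cons_self))

theorem exists_eq_cons_of_forall_le [Preorder α] {b : α} {u : List α}
    (hu : u.Pairwise (· < ·)) (hb : b ∈ u) (hmin : ∀ c ∈ u, b ≤ c) : ∃ u', u = b :: u' := by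
  obtain _ | ⟨c, u⟩ := u
  · simp at hb
  · obtain rfl | hbu := List.mem_cons.mp hb
    · exact ⟨u, rfl⟩
    · exact absurd (hmin c List.mem_cons_self) (List.rel_of_pairwise_cons hu hbu).not_ge

theorem mem_unshuffles_of_pairwise [Preorder α] {l u v : List α} (hl : l.Pairwise (· < ·))
    (hu : u.Pairwise (· < ·)) (hv : v.Pairwise (· < ·)) (huv : (u ++ v).Perm l) :
    (u, v) ∈ unshuffles l := by
  induction l generalizing u v with
  | nil => simp_all [unshuffles]
  | cons b l ih =>
    rw [List.pairwise_cons] at hl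
    have hmin : ∀ c ∈ u ++ v, b ≤ c := fun c hc =>
      (List.mem_cons.mp (huv.subset hc)).elim (fun h => h.ge) (fun h => (hl.1 c h).le)
    simp only [unshuffles, List.mem_append, List.mem_map, Prod.ext_iff]
    rcases List.mem_append.mp (huv.symm.subset List.mem_cons_self) with hbu | hbv
    · obtain ⟨u, rfl⟩ := exists_eq_cons_of_forall_le hu hbu fun c hc => hmin c (by simp [hc])
      exact .inl ⟨(u, v), ih hl.2 hu.of_cons hv huv.cons_inv, rfl, rfl⟩
    · obtain ⟨v, rfl⟩ := exists_eq_cons_of_forall_le hv hbv fun c hc => hmin c (by simp [hc])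
      exact .inr ⟨(u, v), ih hl.2 hu hv.of_cons (List.perm_middle.symm.trans huv).cons_inv,
        rfl, rfl⟩

end Unshuffles

section Expansion
variable {A : Type*} [Ring A]

def unshuffleTerm (a : A) (p : List A × List A) : A :=
  (-1) ^ p.1.length * (p.1.reverse.prod * a * p.2.prod)

theorem iterBracket_cons_eq_sum_unshuffles (a : A) (l : List A) :
    iterBracket (a :: l) = ((unshuffles l).map (unshuffleTerm a)).sum := by
  induction l generalizing a with
  | nil => simp [iterBracket, unshuffles, unshuffleTerm]
  | cons b l ih =>
    have hleft : ∀ p : List A × List A,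
        unshuffleTerm a (b :: p.1, p.2) = unshuffleTerm (-(b * a)) p := fun p => by
      simp [unshuffleTerm, pow_succ, mul_assoc]
    have hright : ∀ p : List A × List A,
        unshuffleTerm a (p.1, b :: p.2) = unshuffleTerm (a * b) p := fun p => by
      simp [unshuffleTerm, mul_assoc]
    have hsplit : unshuffleTerm (a * b - b * a) =
        fun p => unshuffleTerm (-(b * a)) p + unshuffleTerm (a * b) p := by
      funext p
      simp only [unshuffleTerm, mul_add, add_mul, sub_eq_neg_add]
    simp only [iterBracket, ih, unshuffles, List.map_append, List.map_map, List.sum_append,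
      Function.comp_def, hleft, hright, hsplit, List.sum_map_add]

end Expansion

section Valley
variable {α : Type*}

def IsValley [Preorder α] (L : List α) (k : ℕ) : Prop :=
  (L.take (k + 1)).Pairwise (· > ·) ∧ (L.drop k).Pairwise (· < ·)

theorem isValley_iff_forall_lt_iff [LinearOrder α] {L : List α} (hL : L.Nodup) (k : ℕ) :
    IsValley L k ↔ ∀ (i : ℕ) (hi : i + 1 < L.length), L[i + 1] < L[i] ↔ i < k := by
  simp only [IsValley, ← List.isChain_iff_pairwise, List.isChain_iff_getElem, List.length_take,
    List.length_drop, List.getElem_take, List.getElem_drop]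
  constructor
  · rintro ⟨hdec, hinc⟩ i hi
    refine ⟨fun hlt => ?_, fun hik => hdec i (by omega)⟩
    by_contra hki
    have := hinc (i - k) (by omega)
    simp only [show k + (i - k) = i by omega, show k + (i - k + 1) = i + 1 by omega] at this
    exact lt_asymm hlt this
  · intro h
    refine ⟨fun i hi => (h i (by omega)).mpr (by omega), fun i hi => ?_⟩
    have hne : L[k + i] ≠ L[k + (i + 1)] := fun heq =>
      absurd (hL.getElem_inj_iff.mp heq) (by omega)
    exact lt_of_le_of_ne (not_lt.mp fun hlt => by have := (h (k + i) (by omega)).mp hlt; omega) hne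

theorem IsValley.getElem_le [LinearOrder α] {L : List α} {k : ℕ} (hv : IsValley L k)
    (hk : k < L.length) {b : α} (hb : b ∈ L) : L[k] ≤ b := by
  have htake : L.take (k + 1) = L.take k ++ [L[k]] := List.take_succ_eq_append_getElem hk
  have hdrop : L.drop k = L[k] :: L.drop (k + 1) := List.drop_eq_getElem_cons hk
  rw [← List.take_append_drop k L, List.mem_append] at hb
  obtain ⟨hdec, hinc⟩ := hv
  rw [htake, List.pairwise_append] at hdec
  rw [hdrop, List.pairwise_cons] at hinc
  rcases hb with hb | hb
  · exact (hdec.2.2 b hb _ List.mem_cons_self).le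
  · rw [hdrop] at hb
    obtain rfl | hb := List.mem_cons.mp hb
    exacts [le_rfl, (hinc.1 b hb).le]

theorem isValley_reverse_append_cons [Preorder α] {u v : List α} {a : α}
    (hu : u.Pairwise (· < ·)) (hv : v.Pairwise (· < ·)) (hau : ∀ b ∈ u, a < b)
    (hav : ∀ b ∈ v, a < b) : IsValley (u.reverse ++ a :: v) u.length := by
  constructor
  · rw [List.append_cons, List.take_left' (by simp), List.pairwise_append, List.pairwise_reverse]
    simpa [List.mem_reverse] using ⟨hu, hau⟩
  · rw [List.drop_left' List.length_reverse, List.pairwise_cons]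
    exact ⟨hav, hv⟩

theorem IsValley.eq_take_append_cons_drop [LinearOrder α] {L : List α} {k : ℕ}
    (hv : IsValley L k) (hk : k < L.length) {a : α} (ha : a ∈ L) (hmin : ∀ b ∈ L, a ≤ b) :
    L = L.take k ++ a :: L.drop (k + 1) := by
  have hLk : L[k] = a := le_antisymm (hv.getElem_le hk ha) (hmin _ (List.getElem_mem hk))
  rw [← hLk, ← List.drop_eq_getElem_cons hk, List.take_append_drop]

end Valley

section Descents
variable {n : ℕ}

theorem add_one_mem_descSet_iff (σ : Equiv.Perm (Fin n)) {i : ℕ} (hi : i + 1 < n) :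
    i + 1 ∈ descSet σ ↔ σ ⟨i + 1, hi⟩ < σ ⟨i, by omega⟩ := by
  simp [descSet, hi]

theorem exists_perm_ofFn_eq {l : List (Fin n)} (hl : l.Perm (List.finRange n)) :
    ∃ σ : Equiv.Perm (Fin n), List.ofFn σ = l := by
  have hlen : l.length = n := by simpa using hl.length_eq
  let e := (hl.nodup_iff.mpr (List.nodup_finRange n)).getEquivOfForallMemList l
    fun a => hl.mem_iff.mpr (List.mem_finRange a)
  exact ⟨(finCongr hlen.symm).trans e, List.ext_getElem (by simp [hlen]) fun i _ _ => by simp [e]⟩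

theorem ofFn_perm_finRange (σ : Equiv.Perm (Fin n)) : (List.ofFn σ).Perm (List.finRange n) := by
  simpa [List.ofFn_id] using σ.ofFn_comp_perm id

theorem descSet_eq_Icc_iff_isValley (σ : Equiv.Perm (Fin n)) {k : ℕ} (hk : k < n) :
    descSet σ = Finset.Icc 1 k ↔ IsValley (List.ofFn σ) k := by
  rw [isValley_iff_forall_lt_iff (List.nodup_ofFn.mpr σ.injective)]
  simp only [List.length_ofFn, List.getElem_ofFn]
  constructor
  · intro h i hi
    rw [← add_one_mem_descSet_iff σ hi, h, Finset.mem_Icc]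
    omega
  · intro h
    ext j
    rw [Finset.mem_Icc]
    rcases j with _ | i
    · simp [descSet]
    · by_cases hi : i + 1 < n
      · rw [add_one_mem_descSet_iff σ hi, h i hi]
        omega
      · refine iff_of_false (fun hmem => hi ?_) (by omega)
        exact (Finset.mem_Ioo.mp (Finset.filter_subset _ _ hmem)).2

end Descents

section ValleyPermutations
variable {m : ℕ}

theorem pairwise_lt_map_succ_finRange (m : ℕ) :
    ((List.finRange m).map Fin.succ).Pairwise (· < ·) :=
  (List.pairwise_lt_finRange m).map Fin.succ fun _ _ => Fin.succ_lt_succ_iff.mpr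

theorem isValley_of_mem_unshuffles {p : List (Fin (m + 1)) × List (Fin (m + 1))}
    (hp : p ∈ unshuffles ((List.finRange m).map Fin.succ)) :
    IsValley (p.1.reverse ++ 0 :: p.2) p.1.length := by
  have hsorted := pairwise_lt_map_succ_finRange m
  have hpos : ∀ l : List (Fin (m + 1)), l.Sublist ((List.finRange m).map Fin.succ) →
      ∀ b ∈ l, 0 < b := fun l hl b hb => by
    obtain ⟨c, -, rfl⟩ := List.mem_map.mp (hl.subset hb)
    exact Fin.succ_pos c
  obtain ⟨h₁, h₂⟩ := sublist_of_mem_unshuffles hp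
  exact isValley_reverse_append_cons (hsorted.sublist h₁) (hsorted.sublist h₂) (hpos _ h₁)
    (hpos _ h₂)

theorem perm_finRange_of_mem_unshuffles {p : List (Fin (m + 1)) × List (Fin (m + 1))}
    (hp : p ∈ unshuffles ((List.finRange m).map Fin.succ)) :
    (p.1.reverse ++ 0 :: p.2).Perm (List.finRange (m + 1)) := by
  rw [List.finRange_succ]
  exact List.perm_middle.trans
    ((((List.reverse_perm p.1).append_right p.2).trans (perm_of_mem_unshuffles hp)).cons 0)

theorem ofFn_eq_of_isValley {σ : Equiv.Perm (Fin (m + 1))} {k : ℕ} (hk : k < m + 1)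
    (hv : IsValley (List.ofFn σ) k) :
    List.ofFn σ = (List.ofFn σ).take k ++ 0 :: (List.ofFn σ).drop (k + 1) :=
  hv.eq_take_append_cons_drop (by simpa using hk) (List.mem_ofFn.mpr ⟨σ.symm 0, by simp⟩)
    fun b _ => Fin.zero_le b

theorem mem_unshuffles_of_isValley {σ : Equiv.Perm (Fin (m + 1))} {k : ℕ} (hk : k < m + 1)
    (hv : IsValley (List.ofFn σ) k) :
    (((List.ofFn σ).take k).reverse, (List.ofFn σ).drop (k + 1)) ∈
      unshuffles ((List.finRange m).map Fin.succ) := by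
  have hperm : ((List.ofFn σ).take k ++ 0 :: (List.ofFn σ).drop (k + 1)).Perm
      (0 :: (List.finRange m).map Fin.succ) := by
    rw [← ofFn_eq_of_isValley hk hv, ← List.finRange_succ]
    exact ofFn_perm_finRange σ
  refine mem_unshuffles_of_pairwise (pairwise_lt_map_succ_finRange m) ?_ ?_ ?_
  · rw [List.pairwise_reverse]
    exact hv.1.sublist (List.take_sublist_take_left k.le_succ)
  · exact hv.2.sublist (List.drop_sublist_drop_left _ k.le_succ)
  · exact ((List.reverse_perm _).append_right _).trans (List.perm_middle.symm.trans hperm).cons_inv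

theorem sum_descSet_eq_Icc {M : Type*} [AddCommMonoid M] (f : List (Fin (m + 1)) → M) {k : ℕ}
    (hk : k < m + 1) :
    ∑ σ ∈ Finset.univ.filter (fun σ : Equiv.Perm (Fin (m + 1)) => descSet σ = Finset.Icc 1 k),
        f (List.ofFn σ) =
      ∑ p ∈ (unshuffles ((List.finRange m).map Fin.succ)).toFinset.filter (·.1.length = k),
        f (p.1.reverse ++ 0 :: p.2) := by
  have hvalley : ∀ {σ : Equiv.Perm (Fin (m + 1))},
      σ ∈ Finset.univ.filter (fun σ => descSet σ = Finset.Icc 1 k) → IsValley (List.ofFn σ) k :=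
    fun hσ => (descSet_eq_Icc_iff_isValley _ hk).mp (Finset.mem_filter.mp hσ).2
  refine Finset.sum_bij (fun σ _ => (((List.ofFn σ).take k).reverse, (List.ofFn σ).drop (k + 1)))
    (fun σ hσ => ?_) (fun σ₁ hσ₁ σ₂ hσ₂ h => ?_) (fun p hp => ?_) (fun σ hσ => ?_)
  · simpa [hk.le] using mem_unshuffles_of_isValley hk (hvalley hσ)
  · simp only [Prod.mk.injEq, List.reverse_inj] at h
    refine Equiv.coe_fn_injective (List.ofFn_injective ?_)
    rw [ofFn_eq_of_isValley hk (hvalley hσ₁), ofFn_eq_of_isValley hk (hvalley hσ₂), h.1, h.2]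
  · obtain ⟨hmem, rfl⟩ : p ∈ unshuffles ((List.finRange m).map Fin.succ) ∧ p.1.length = k := by
      simpa using hp
    obtain ⟨σ, hσ⟩ := exists_perm_ofFn_eq (perm_finRange_of_mem_unshuffles hmem)
    refine ⟨σ, ?_, ?_⟩
    · rw [Finset.mem_filter, descSet_eq_Icc_iff_isValley _ hk, hσ]
      exact ⟨Finset.mem_univ σ, isValley_of_mem_unshuffles hmem⟩
    · rw [hσ, List.take_left' List.length_reverse, List.append_cons,
        List.drop_left' (by simp), List.reverse_reverse]
  · dsimp only
    rw [List.reverse_reverse, ← ofFn_eq_of_isValley hk (hvalley hσ)]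

theorem iterBracket_ofFn_eq_sum_unshuffles {A : Type*} [Ring A] (x : Fin (m + 1) → A) :
    iterBracket (List.ofFn x) =
      ∑ p ∈ (unshuffles ((List.finRange m).map Fin.succ)).toFinset,
        (-1 : A) ^ p.1.length * ((p.1.reverse ++ 0 :: p.2).map x).prod := by
  have hx : List.ofFn x = x 0 :: ((List.finRange m).map Fin.succ).map x := by
    rw [List.ofFn_eq_map, List.finRange_succ, List.map_cons]
  have hnodup := (pairwise_lt_map_succ_finRange m).imp ne_of_lt
  rw [hx, iterBracket_cons_eq_sum_unshuffles, unshuffles_map, List.map_map,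
    List.sum_toFinset _ (nodup_unshuffles hnodup)]
  congr 1
  refine List.map_congr_left fun p _ => ?_
  simp [unshuffleTerm, List.map_reverse, List.prod_append, mul_assoc]

end ValleyPermutations

theorem dynkin_iterated_bracket_general {A : Type*} [Ring A] (n : ℕ) (x : Fin n → A) :
    iterBracket (List.ofFn x) =
      ∑ i ∈ Finset.range n, (-1 : A) ^ i *
        ∑ σ ∈ Finset.univ.filter
            (fun σ : Equiv.Perm (Fin n) => descSet σ = Finset.Icc 1 i),
          (List.ofFn (fun j => x (σ j))).prod := by
  rcases n with _ | m
  · simp [iterBracket]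
  have hlength : ∀ p ∈ (unshuffles ((List.finRange m).map Fin.succ)).toFinset,
      p.1.length ∈ Finset.range (m + 1) := fun p hp => by
    simpa [Nat.lt_succ_iff] using (sublist_of_mem_unshuffles (List.mem_toFinset.mp hp)).1.length_le
  rw [iterBracket_ofFn_eq_sum_unshuffles, ← Finset.sum_fiberwise_of_maps_to hlength]
  refine Finset.sum_congr rfl fun i hi => ?_
  have hlevel := sum_descSet_eq_Icc (fun l => (l.map x).prod) (Finset.mem_range.mp hi)
  simp only [List.map_ofFn, Function.comp_def] at hlevel
  rw [hlevel, Finset.mul_sum]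
  exact Finset.sum_congr rfl fun p hp => by rw [(Finset.mem_filter.mp hp).2]

/-- the Dynkin element `𝒟_n = Σ_{i=0}^{n-1} (-1)^i D_{={1,…,i}}`
realizes the iterated bracketing. -/
theorem dynkin_iterated_bracket {A : Type*} [Ring A] (n : ℕ) (hn : 1 ≤ n) (x : Fin n → A) :
    iterBracket (List.ofFn x) =
      ∑ i ∈ Finset.range n, (-1 : A) ^ i *
        ∑ σ ∈ Finset.univ.filter
            (fun σ : Equiv.Perm (Fin n) => descSet σ = Finset.Icc 1 i),
          (List.ofFn (fun j => x (σ j))).prod :=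
  dynkin_iterated_bracket_general n x
end

section
/- Let A be a Banach algebra with unit and H : ℝ → A continuous. Then for every t ≥ 0 the time-ordered exponential series T(exp ∫_0^t H(x)dx) := 1 + Σ_{n≥1} H_n(t) converges absolutely in A, and the function A(t) := T(exp ∫_0^t H(x)dx) is differentiable on [0,∞) and solves the evolution equation A'(t) = A(t)·H(t) with initial condition A(0) = 1. -/
open MeasureTheory

/-- The simplex `Δ_t^n = {0 ≤ t₁ ≤ ⋯ ≤ tₙ ≤ t}` inside `Fin n → ℝ`. -/
def simplex (n : ℕ) (t : ℝ) : Set (Fin n → ℝ) :=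
  {u | (∀ i, 0 ≤ u i ∧ u i ≤ t) ∧ ∀ i j, i ≤ j → u i ≤ u j}

variable {A : Type*} [NormedRing A] [NormedAlgebra ℝ A] [CompleteSpace A]

/-- The iterated integral `H_σ(t) = ∫_{Δ_t^n} H(t_{σ(1)})⋯H(t_{σ(n)}) dt₁⋯dtₙ`. -/
noncomputable def Hperm (H : ℝ → A) {n : ℕ} (σ : Equiv.Perm (Fin n)) (t : ℝ) : A :=
  ∫ u in simplex n t, (List.ofFn (fun j => H (u (σ j)))).prod

/-- `H_n(t) = ∫_{Δ_t^n} H(t₁)⋯H(tₙ) dt₁⋯dtₙ`, with `H_0(t) = 1`. -/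
noncomputable def Hn (H : ℝ → A) : ℕ → ℝ → A
  | 0, _ => 1
  | (n + 1), t => Hperm H (1 : Equiv.Perm (Fin (n + 1))) t

/-- The iterated integral evaluated on the Dynkin element:
`H_{𝒟_m}(t) = Σ_{j=0}^{m-1} (-1)^j H_{D_{={1,…,j}}^{(m)}}(t)`. -/
noncomputable def HDyn (H : ℝ → A) (m : ℕ) (t : ℝ) : A :=
  ∑ j ∈ Finset.range m, (-1 : ℝ) ^ j •
    ∑ σ ∈ Finset.univ.filter
        (fun σ : Equiv.Perm (Fin m) => descSet σ = Finset.Icc 1 j),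
      Hperm H σ t

/-! Peeling off the last coordinate of the simplex gives the recursion
`H_{n+1}(t) = ∫₀ᵗ H_n(s) H(s) ds`, hence the bound `‖H_n(t)‖ ≤ ‖1‖ (M t)ⁿ / n!` where `M` bounds
`‖H‖` on `[0, t]`. The series therefore converges locally uniformly and may be integrated
termwise, so that `A(t) = 1 + ∫₀ᵗ A(s) H(s) ds`; the fundamental theorem of calculus finishes. -/

lemma isClosed_simplex (n : ℕ) (t : ℝ) : IsClosed (simplex n t) := by
  simp only [simplex, Set.ofPred_and, Set.ofPred_forall]
  refine .inter (isClosed_iInter fun i => .inter ?_ ?_)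
    (isClosed_iInter fun i => isClosed_iInter fun j => isClosed_iInter fun _ => ?_)
  · exact isClosed_le continuous_const (continuous_apply i)
  · exact isClosed_le (continuous_apply i) continuous_const
  · exact isClosed_le (continuous_apply i) (continuous_apply j)

lemma isCompact_simplex (n : ℕ) (t : ℝ) : IsCompact (simplex n t) :=
  (isCompact_Icc (a := 0) (b := fun _ => t)).of_isClosed_subset (isClosed_simplex n t)
    fun _ hu => ⟨fun i => (hu.1 i).1, fun i => (hu.1 i).2⟩

lemma snoc_mem_simplex_succ_iff {n : ℕ} {s t : ℝ} {u : Fin n → ℝ} :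
    (Fin.snoc u s : Fin (n + 1) → ℝ) ∈ simplex (n + 1) t ↔ s ∈ Set.Icc 0 t ∧ u ∈ simplex n s := by
  simp only [simplex, Set.mem_ofPred_eq, Set.mem_Icc, Fin.forall_fin_succ', Fin.snoc_castSucc,
    Fin.snoc_last, Fin.castSucc_le_castSucc_iff, Fin.le_last, Fin.last_le_iff, le_refl,
    Fin.castSucc_ne_last, false_imp_iff, forall_const, implies_true, and_true]
  constructor
  · rintro ⟨⟨hu, hs⟩, hmono⟩
    exact ⟨hs, fun i => ⟨(hu i).1, (hmono i).2⟩, fun i => (hmono i).1⟩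
  · rintro ⟨hs, hu, hmono⟩
    exact ⟨⟨fun i => ⟨(hu i).1, (hu i).2.trans hs.2⟩, hs⟩, fun i => ⟨hmono i, (hu i).2⟩⟩

lemma setIntegral_simplex_succ {E : Type*} [NormedAddCommGroup E] [NormedSpace ℝ E] {n : ℕ}
    {t : ℝ} {f : (Fin (n + 1) → ℝ) → E} (hf : IntegrableOn f (simplex (n + 1) t)) :
    ∫ v in simplex (n + 1) t, f v = ∫ s in Set.Icc 0 t, ∫ u in simplex n s, f (Fin.snoc u s) := by
  set e := (MeasurableEquiv.piFinSuccAbove (fun _ : Fin (n + 1) => ℝ) (Fin.last n)).symm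
  have he : MeasurePreserving e := (volume_preserving_piFinSuccAbove _ _).symm _
  have he_apply : ∀ p, e p = Fin.snoc p.2 p.1 := fun p => by simp [e]; rfl
  have hmeas := (isClosed_simplex (n + 1) t).measurableSet
  have hind : ∀ s u, (simplex (n + 1) t).indicator f (Fin.snoc u s)
      = (Set.Icc 0 t).indicator
          (fun s => (simplex n s).indicator (fun u => f (Fin.snoc u s)) u) s := by
    intro s u
    by_cases hs : s ∈ Set.Icc 0 t <;> by_cases hu : u ∈ simplex n s <;>
      simp [Set.indicator, snoc_mem_simplex_succ_iff, hs, hu]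
  have hint : Integrable (fun p => (simplex (n + 1) t).indicator f (e p)) (volume.prod volume) := by
    rw [← Measure.volume_eq_prod]
    exact (he.integrable_comp_emb e.measurableEmbedding).2 (hf.integrable_indicator hmeas)
  rw [← integral_indicator hmeas, ← he.integral_comp', Measure.volume_eq_prod, integral_prod _ hint,
    ← integral_indicator measurableSet_Icc]
  congr 1 with s
  by_cases hs : s ∈ Set.Icc 0 t
  · simp [he_apply, hind, hs, integral_indicator (isClosed_simplex n s).measurableSet]
  · simp [he_apply, hind, hs]

section TimeOrderedExp

open scoped Nat

variable {H : ℝ → A}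

lemma Hn_eq_setIntegral (H : ℝ → A) (n : ℕ) (t : ℝ) :
    Hn H n t = ∫ u in simplex n t, (List.ofFn fun j => H (u j)).prod := by
  cases n with
  | zero => simp [Hn, simplex, measureReal_def, volume_pi]
  | succ n => simp [Hn, Hperm]

lemma Hn_succ_eq_setIntegral_Icc (hH : Continuous H) (n : ℕ) (t : ℝ) :
    Hn H (n + 1) t = ∫ s in Set.Icc 0 t, Hn H n s * H s := by
  have hprod : ∀ m, Continuous fun u : Fin m → ℝ => (List.ofFn fun j => H (u j)).prod :=
    fun m => by
      simpa only [List.ofFn_eq_map] using continuous_list_prod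
        (f := fun (i : Fin m) (u : Fin m → ℝ) => H (u i)) _ fun i _ => hH.comp (continuous_apply i)
  rw [Hn_eq_setIntegral, setIntegral_simplex_succ
    ((hprod _).continuousOn.integrableOn_compact (isCompact_simplex _ _))]
  refine setIntegral_congr_fun measurableSet_Icc fun s _ => ?_
  simp only [List.ofFn_succ', Fin.snoc_castSucc, Fin.snoc_last, List.prod_concat]
  rw [integral_mul_const_of_integrable
    ((hprod n).continuousOn.integrableOn_compact (isCompact_simplex _ _)), Hn_eq_setIntegral]

lemma Hn_succ_eq_intervalIntegral (hH : Continuous H) (n : ℕ) {t : ℝ} (ht : 0 ≤ t) :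
    Hn H (n + 1) t = ∫ s in 0..t, Hn H n s * H s := by
  rw [Hn_succ_eq_setIntegral_Icc hH, integral_Icc_eq_integral_Ioc,
    intervalIntegral.integral_of_le ht]

lemma Hn_succ_of_nonpos (hH : Continuous H) (n : ℕ) {t : ℝ} (ht : t ≤ 0) : Hn H (n + 1) t = 0 := by
  rw [Hn_succ_eq_setIntegral_Icc hH]
  exact setIntegral_measure_zero _ (by simpa using ht)

lemma continuous_Hn (hH : Continuous H) (n : ℕ) : Continuous (Hn H n) := by
  induction n with
  | zero => exact continuous_const
  | succ n ih =>
    have hprimitive : Hn H (n + 1) = fun t => ∫ s in 0..max t 0, Hn H n s * H s := by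
      ext t
      rcases le_total 0 t with ht | ht
      · rw [max_eq_left ht, Hn_succ_eq_intervalIntegral hH n ht]
      · rw [max_eq_right ht, intervalIntegral.integral_same, Hn_succ_of_nonpos hH n ht]
    rw [hprimitive]
    exact (intervalIntegral.continuous_primitive
      (fun a b => (ih.mul hH).intervalIntegrable a b) 0).comp (continuous_id.max continuous_const)

lemma norm_Hn_le (hH : Continuous H) {M T : ℝ} (hM : ∀ s ∈ Set.Icc 0 T, ‖H s‖ ≤ M) (n : ℕ) :
    ∀ t ∈ Set.Icc 0 T, ‖Hn H n t‖ ≤ ‖(1 : A)‖ * (M * t) ^ n / n ! := by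
  induction n with
  | zero => simp [Hn]
  | succ n ih =>
    rintro t ⟨ht, htT⟩
    rw [Hn_succ_eq_intervalIntegral hH n ht]
    calc ‖∫ s in 0..t, Hn H n s * H s‖
        ≤ ∫ s in 0..t, ‖(1 : A)‖ * M ^ (n + 1) / n ! * s ^ n := by
          refine intervalIntegral.norm_integral_le_of_norm_le ht (ae_of_all _ fun s hs => ?_)
            ((continuous_const.mul (continuous_pow n)).intervalIntegrable _ _)
          have hs' : s ∈ Set.Icc 0 T := ⟨hs.1.le, hs.2.trans htT⟩
          calc ‖Hn H n s * H s‖ ≤ ‖(1 : A)‖ * (M * s) ^ n / n ! * M :=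
                (norm_mul_le _ _).trans (mul_le_mul (ih s hs') (hM s hs') (norm_nonneg _)
                  ((norm_nonneg _).trans (ih s hs')))
            _ = ‖(1 : A)‖ * M ^ (n + 1) / n ! * s ^ n := by ring
      _ = ‖(1 : A)‖ * (M * t) ^ (n + 1) / (n + 1)! := by
          rw [intervalIntegral.integral_const_mul, integral_pow, Nat.factorial_succ]
          push_cast
          field_simp
          ring

lemma norm_Hn_le_of_le (hH : Continuous H) {M T : ℝ} (hT : 0 ≤ T)
    (hM : ∀ s ∈ Set.Icc 0 T, ‖H s‖ ≤ M) (n : ℕ) {t : ℝ} (ht : t ≤ T) :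
    ‖Hn H n t‖ ≤ ‖(1 : A)‖ * (M * T) ^ n / n ! := by
  have hM0 : 0 ≤ M := (norm_nonneg _).trans (hM 0 ⟨le_rfl, hT⟩)
  rcases n with _ | n
  · simp [Hn]
  rcases le_total t 0 with ht0 | ht0
  · rw [Hn_succ_of_nonpos hH n ht0, norm_zero]
    positivity
  · refine (norm_Hn_le hH hM (n + 1) t ⟨ht0, ht⟩).trans ?_
    gcongr

lemma exists_summable_bound_Hn (hH : Continuous H) (T : ℝ) :
    ∃ C : ℕ → ℝ, Summable C ∧ ∀ n, ∀ t ≤ T, ‖Hn H n t‖ ≤ C n := by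
  obtain ⟨M, hM⟩ := (isCompact_Icc (a := 0) (b := max T 0)).exists_bound_of_continuousOn
    hH.continuousOn
  refine ⟨fun n => ‖(1 : A)‖ * (M * max T 0) ^ n / n !, ?_, fun n t ht => ?_⟩
  · simpa only [mul_div_assoc] using (Real.summable_pow_div_factorial _).mul_left _
  · exact norm_Hn_le_of_le hH (le_max_right T 0) hM n (ht.trans (le_max_left T 0))

lemma summable_norm_Hn (hH : Continuous H) (t : ℝ) : Summable fun n => ‖Hn H n t‖ := by
  obtain ⟨C, hC, hbound⟩ := exists_summable_bound_Hn hH t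
  exact hC.of_nonneg_of_le (fun _ => norm_nonneg _) fun n => hbound n t le_rfl

variable (H) in
noncomputable def timeOrderedExp (t : ℝ) : A := ∑' n, Hn H n t

lemma timeOrderedExp_of_nonpos (hH : Continuous H) {t : ℝ} (ht : t ≤ 0) :
    timeOrderedExp H t = 1 :=
  (tsum_eq_single 0 fun n hn => by
    obtain ⟨m, rfl⟩ := Nat.exists_eq_succ_of_ne_zero hn
    exact Hn_succ_of_nonpos hH m ht).trans rfl

lemma continuous_timeOrderedExp (hH : Continuous H) : Continuous (timeOrderedExp H) := by
  refine continuous_iff_continuousAt.2 fun t => ?_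
  obtain ⟨C, hC, hbound⟩ := exists_summable_bound_Hn hH (t + 1)
  exact (continuousOn_tsum (fun n => (continuous_Hn hH n).continuousOn) hC
    fun n s hs => hbound n s (le_of_lt hs)).continuousAt (Iio_mem_nhds (lt_add_one t))

lemma timeOrderedExp_eq_one_add_integral (hH : Continuous H) {t : ℝ} (ht : 0 ≤ t) :
    timeOrderedExp H t = 1 + ∫ s in 0..t, timeOrderedExp H s * H s := by
  obtain ⟨C, hC, hbound⟩ := exists_summable_bound_Hn hH t
  have hsum : HasSum (fun n => ∫ s in 0..t, Hn H n s * H s)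
      (∫ s in 0..t, timeOrderedExp H s * H s) := by
    refine intervalIntegral.hasSum_integral_of_dominated_convergence (fun n s => C n * ‖H s‖)
      (fun n => ((continuous_Hn hH n).mul hH).aestronglyMeasurable)
      (fun n => ae_of_all _ fun s hs => ?_) (ae_of_all _ fun _ _ => hC.mul_right _) ?_
      (ae_of_all _ fun s _ => (summable_norm_Hn hH s).of_norm.hasSum.mul_right (H s))
    · rw [Set.uIoc_of_le ht] at hs
      exact (norm_mul_le _ _).trans (mul_le_mul_of_nonneg_right (hbound n s hs.2) (norm_nonneg _))
    · simp_rw [tsum_mul_right]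
      exact (continuous_const.mul hH.norm).intervalIntegrable _ _
  rw [timeOrderedExp, (summable_norm_Hn hH t).of_norm.tsum_eq_zero_add, ← hsum.tsum_eq]
  simp only [Hn_succ_eq_intervalIntegral hH _ ht]
  rfl

end TimeOrderedExp

/-- for a continuous `H` with values in a unital Banach algebra, the
time-ordered exponential series `A(t) = 1 + Σ_{n≥1} H_n(t)` converges absolutely for
every `t ≥ 0`, satisfies `A(0) = 1`, and is differentiable on `[0,∞)` with
`A'(t) = A(t)·H(t)`. -/
theorem timeOrderedExp_solves_evolution (H : ℝ → A) (hH : Continuous H) :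
    (∀ t : ℝ, 0 ≤ t → Summable (fun n : ℕ => ‖Hn H n t‖)) ∧
    (∑' n : ℕ, Hn H n 0) = 1 ∧
    (∀ t : ℝ, 0 ≤ t →
      HasDerivWithinAt (fun s : ℝ => ∑' n : ℕ, Hn H n s)
        ((∑' n : ℕ, Hn H n t) * H t) (Set.Ici 0) t) := by
  refine ⟨fun t _ => summable_norm_Hn hH t, timeOrderedExp_of_nonpos hH le_rfl, fun t ht => ?_⟩
  have hintegral : HasDerivAt (fun s => 1 + ∫ r in 0..s, timeOrderedExp H r * H r)
      (timeOrderedExp H t * H t) t :=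
    (((continuous_timeOrderedExp hH).mul hH).integral_hasStrictDerivAt 0 t).hasDerivAt.const_add 1
  exact hintegral.hasDerivWithinAt.congr (fun s hs => timeOrderedExp_eq_one_add_integral hH hs)
    (timeOrderedExp_eq_one_add_integral hH ht)
end

section
/- Let A be a Banach algebra with unit, H : ℝ → A continuous, t ≥ 0, and n_1, …, n_k ≥ 1 with n = n_1 + ⋯ + n_k. Then the product of k iterated simplex integrals satisfies H_{n_1}(t)·H_{n_2}(t)⋯H_{n_k}(t) = Σ_{σ ∈ S_n, Desc(σ) ⊆ {n_1, n_1+n_2, …, n_1+⋯+n_{k−1}}} H_σ(t); that is, H_{n_1} H_{n_2} ⋯ H_{n_k} = H_{D_{\{n_1, n_1+n_2, …, n_1+⋯+n_{k−1}\}}^{(n)}}. -/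
open MeasureTheory

variable {A : Type*} [NormedRing A] [NormedAlgebra ℝ A] [CompleteSpace A]

/-!
Both sides are integrals of `H (v 0) ⋯ H (v (n - 1))` over parts of the cube `[0, t]ⁿ`.
By Fubini, `H_{n₁} ⋯ H_{n_k}` integrates over the tuples that are monotone on each of the `k`
consecutive blocks of indices, while the substitution `v = u ∘ σ` turns `H_σ` into the integral
over the cone of tuples ordered as `σ` prescribes. Sorting `v` stably shows that `v` is
block-monotone exactly when it lies in the cone of some `σ` whose descents are block boundaries,
and two distinct cones meet only in tuples with a repeated entry, a null set.
-/

open MeasureTheory Set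

section BlockMonotone

variable {α : Type*} {n : ℕ}

/-- Indices are 0-based: `j ∈ S` cuts between `v (j - 1)` and `v j`, matching the 1-based
convention of `descSet`. -/
def BlockMonotone [Preorder α] (S : Finset ℕ) (v : Fin n → α) : Prop :=
  ∀ i j : Fin n, (i : ℕ) + 1 = j → (j : ℕ) ∉ S → v i ≤ v j

theorem blockMonotone_empty_iff [Preorder α] {v : Fin n → α} :
    BlockMonotone ∅ v ↔ Monotone v := by
  simp [BlockMonotone, monotone_iff_forall_covBy, Fin.covBy_iff]

theorem BlockMonotone.comp_monotone [Preorder α] {β : Type*} [Preorder β] {S : Finset ℕ}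
    {v : Fin n → α} {g : α → β} (hv : BlockMonotone S v) (hg : Monotone g) :
    BlockMonotone S (g ∘ v) :=
  fun i j hij hj => hg (hv i j hij hj)

theorem descSet_subset_iff {σ : Equiv.Perm (Fin n)} {S : Finset ℕ} :
    descSet σ ⊆ S ↔ BlockMonotone S σ := by
  simp only [descSet, BlockMonotone, Finset.subset_iff, Finset.mem_filter, Finset.mem_Ioo]
  constructor
  · intro h i j hij hj
    by_contra hlt
    have hi : (⟨j - 1, by omega⟩ : Fin n) = i := Fin.ext (by simp only; omega)
    exact hj (h ⟨⟨by omega, j.2⟩, j.2, by rw [hi]; exact not_le.1 hlt⟩)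
  · rintro h x ⟨⟨hx0, hxn⟩, hxn', hlt⟩
    by_contra hx
    exact (h ⟨x - 1, by omega⟩ ⟨x, hxn'⟩ (by simp only; omega) hx).not_gt hlt

/-- `Tuple.sort` is stable: equal entries keep their relative order. -/
theorem sort_inv_le_sort_inv [LinearOrder α] (v : Fin n → α) {i j : Fin n} (hij : i ≤ j)
    (hv : v i ≤ v j) : (Tuple.sort v)⁻¹ i ≤ (Tuple.sort v)⁻¹ j := by
  obtain ⟨hmono, hstable⟩ := Tuple.eq_sort_iff.1 (rfl : Tuple.sort v = Tuple.sort v)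
  by_contra! hlt
  have hvji : v j ≤ v i := by simpa using hmono hlt.le
  have hji := hstable _ _ hlt (by simpa using le_antisymm hvji hv)
  simp only [Equiv.Perm.coe_inv, Equiv.apply_symm_apply] at hji
  exact hji.not_ge hij

theorem BlockMonotone.sort_inv [LinearOrder α] {S : Finset ℕ} {v : Fin n → α}
    (hv : BlockMonotone S v) : BlockMonotone S ⇑(Tuple.sort v)⁻¹ :=
  fun i j hij hj => sort_inv_le_sort_inv v (Fin.le_iff_val_le_val.2 (by omega)) (hv i j hij hj)

def blockBoundaries (l : List ℕ) : Finset ℕ :=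
  (Finset.Ico 1 l.length).image fun j => (l.take j).sum

theorem mem_blockBoundaries_cons {a x : ℕ} {l : List ℕ} :
    x ∈ blockBoundaries (a :: l) ↔ ∃ k < l.length, x = a + (l.take k).sum := by
  simp only [blockBoundaries, Finset.mem_image, Finset.mem_Ico, List.length_cons]
  constructor
  · rintro ⟨j, ⟨hj1, hj2⟩, rfl⟩
    obtain ⟨k, rfl⟩ : ∃ k, j = k + 1 := ⟨j - 1, by omega⟩
    exact ⟨k, by omega, by simp [List.take_succ_cons]⟩
  · rintro ⟨k, hk, rfl⟩
    exact ⟨k + 1, ⟨by omega, by omega⟩, by simp [List.take_succ_cons]⟩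

theorem le_of_mem_blockBoundaries_cons {a x : ℕ} {l : List ℕ}
    (hx : x ∈ blockBoundaries (a :: l)) : a ≤ x := by
  obtain ⟨k, -, rfl⟩ := mem_blockBoundaries_cons.1 hx
  omega

theorem add_mem_blockBoundaries_cons_iff {a j : ℕ} {l : List ℕ} (hj : 0 < j) :
    a + j ∈ blockBoundaries (a :: l) ↔ j ∈ blockBoundaries l := by
  rw [mem_blockBoundaries_cons]
  simp only [blockBoundaries, Finset.mem_image, Finset.mem_Ico]
  constructor
  · rintro ⟨k, hk, hjk⟩
    have hk0 : k ≠ 0 := by rintro rfl; simp only [List.take_zero, List.sum_nil] at hjk; omega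
    exact ⟨k, ⟨by omega, hk⟩, by omega⟩
  · rintro ⟨k, ⟨-, hk⟩, rfl⟩
    exact ⟨k, hk, rfl⟩

theorem blockMonotone_blockBoundaries_cons_iff [Preorder α] {a : ℕ} {l : List ℕ}
    {v : Fin (a + l.sum) → α} :
    BlockMonotone (blockBoundaries (a :: l)) v ↔
      Monotone (fun i => v (Fin.castAdd _ i)) ∧
        BlockMonotone (blockBoundaries l) (fun j => v (Fin.natAdd a j)) := by
  rw [← blockMonotone_empty_iff]
  constructor
  · intro hv
    refine ⟨fun i j hij _ => hv _ _ (by simpa using hij) fun hj => ?_,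
      fun i j hij hj => hv _ _ (by simp only [Fin.val_natAdd]; omega) ?_⟩
    · have := le_of_mem_blockBoundaries_cons hj
      rw [Fin.val_castAdd] at this
      omega
    · rwa [Fin.val_natAdd, add_mem_blockBoundaries_cons_iff (by omega)]
  · rintro ⟨hl, hr⟩ i j hij hj
    cases i using Fin.addCases with
    | left i =>
      cases j using Fin.addCases with
      | left j => exact hl i j (by simpa using hij) (Finset.notMem_empty _)
      | right j =>
        -- `i = a - 1` and `j = a`, which is a cut because the second part is nonempty
        have hj0 : (j : ℕ) = 0 := by simp only [Fin.val_castAdd, Fin.val_natAdd] at hij; omega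
        have hl : l ≠ [] := by rintro rfl; exact j.elim0
        exact absurd (mem_blockBoundaries_cons.2 ⟨0, List.length_pos_iff.2 hl, by simp [hj0]⟩) hj
    | right i =>
      cases j using Fin.addCases with
      | left j => simp only [Fin.val_natAdd, Fin.val_castAdd] at hij; omega
      | right j =>
        have hij' : (i : ℕ) + 1 = j := by simp only [Fin.val_natAdd] at hij; omega
        refine hr i j hij' fun hj' => hj ?_
        rwa [Fin.val_natAdd, add_mem_blockBoundaries_cons_iff (by omega)]

end BlockMonotone

section OrderCone

variable {n : ℕ}

def orderCone (σ : Equiv.Perm (Fin n)) : Set (Fin n → ℝ) :=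
  {v | Monotone (v ∘ ⇑σ⁻¹)}

theorem isClosed_orderCone (σ : Equiv.Perm (Fin n)) : IsClosed (orderCone σ) :=
  isClosed_monotone.preimage (f := fun v : Fin n → ℝ => v ∘ ⇑σ⁻¹) (by fun_prop)

theorem setOf_blockMonotone_eq_biUnion_orderCone (S : Finset ℕ) :
    {v : Fin n → ℝ | BlockMonotone S v} =
      ⋃ σ ∈ Finset.univ.filter (fun σ => descSet σ ⊆ S), orderCone σ := by
  ext v
  simp only [mem_ofPred_eq, mem_iUnion, Finset.mem_filter, Finset.mem_univ, true_and,
    exists_prop, descSet_subset_iff]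
  constructor
  · intro hv
    exact ⟨(Tuple.sort v)⁻¹, hv.sort_inv, by simpa [orderCone] using Tuple.monotone_sort v⟩
  · rintro ⟨σ, hσ, hv⟩
    simpa [Function.comp_def] using hσ.comp_monotone hv

theorem volume_setOf_not_injective {ι : Type*} [Fintype ι] :
    volume {v : ι → ℝ | ¬ Function.Injective v} = 0 := by
  classical
  let diag (i j : ι) : Submodule ℝ (ι → ℝ) :=
    LinearMap.ker (LinearMap.proj (R := ℝ) (φ := fun _ => ℝ) i - LinearMap.proj j)
  have hsub : {v : ι → ℝ | ¬ Function.Injective v} ⊆ ⋃ (i) (j) (_ : i ≠ j), (diag i j : Set _) := by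
    intro v hv
    simp only [Function.Injective, not_forall] at hv
    obtain ⟨i, j, hvij, hij⟩ := hv
    simpa [diag, sub_eq_zero] using ⟨i, j, hij, hvij⟩
  refine measure_mono_null hsub (measure_iUnion_null fun i => measure_iUnion_null fun j =>
    measure_iUnion_null fun hij => Measure.addHaar_submodule _ _ fun htop => ?_)
  have hsingle : Pi.single i (1 : ℝ) ∈ diag i j := htop ▸ Submodule.mem_top
  simp [diag, Pi.single_eq_of_ne' hij] at hsingle

theorem aedisjoint_orderCone {σ τ : Equiv.Perm (Fin n)} (hστ : σ ≠ τ) :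
    AEDisjoint volume (orderCone σ) (orderCone τ) := by
  refine measure_mono_null ?_ volume_setOf_not_injective
  rintro v ⟨hσ, hτ⟩ hinj
  exact hστ <| inv_injective <| DFunLike.coe_injective <|
    hinj.comp_left (Tuple.unique_monotone hσ hτ)

theorem setIntegral_inter_blockMonotone {E : Type*} [NormedAddCommGroup E] [NormedSpace ℝ E]
    {s : Set (Fin n → ℝ)} (hs : MeasurableSet s) {f : (Fin n → ℝ) → E} (hf : IntegrableOn f s)
    (S : Finset ℕ) :
    ∫ v in s ∩ {v | BlockMonotone S v}, f v =
      ∑ σ ∈ Finset.univ.filter (fun σ => descSet σ ⊆ S), ∫ v in s ∩ orderCone σ, f v := by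
  have hunion : s ∩ {v | BlockMonotone S v} =
      ⋃ σ : {σ : Equiv.Perm (Fin n) // descSet σ ⊆ S}, s ∩ orderCone σ := by
    rw [setOf_blockMonotone_eq_biUnion_orderCone, iUnion_subtype]
    simp only [Finset.mem_filter, Finset.mem_univ, true_and, inter_iUnion]
  rw [hunion, integral_iUnion_ae
    (fun σ => (hs.inter (isClosed_orderCone _).measurableSet).nullMeasurableSet)
    (fun σ τ hστ => (aedisjoint_orderCone (Subtype.coe_injective.ne hστ)).mono
      inter_subset_right inter_subset_right)
    (hf.mono_set (iUnion_subset fun _ => inter_subset_left)), tsum_fintype]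
  exact (Finset.sum_subtype (Finset.univ.filter fun σ => descSet σ ⊆ S) (fun σ => by simp)
    fun σ => ∫ v in s ∩ orderCone σ, f v).symm

end OrderCone

def orderedProd {M : Type*} [Monoid M] (H : ℝ → M) {n : ℕ} (v : Fin n → ℝ) : M :=
  (List.ofFn fun j => H (v j)).prod

theorem orderedProd_append {M : Type*} [Monoid M] (H : ℝ → M) {a m : ℕ}
    (v : Fin (a + m) → ℝ) :
    orderedProd H v =
      orderedProd H (fun i => v (Fin.castAdd m i)) *
        orderedProd H (fun j => v (Fin.natAdd a j)) := by
  simp only [orderedProd, List.ofFn_add, List.prod_append]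
  rfl

theorem continuous_orderedProd {M : Type*} [Monoid M] [TopologicalSpace M] [ContinuousMul M]
    {H : ℝ → M} (hH : Continuous H) (n : ℕ) : Continuous (orderedProd H : (Fin n → ℝ) → M) := by
  unfold orderedProd
  simp only [List.ofFn_eq_map]
  exact continuous_list_prod _ fun i _ => hH.comp (continuous_apply i)

theorem setIntegral_fin_zero {E : Type*} [NormedAddCommGroup E] [NormedSpace ℝ E]
    [CompleteSpace E] (f : (Fin 0 → ℝ) → E) {s : Set (Fin 0 → ℝ)} (hs : s.Nonempty) :
    ∫ v in s, f v = f 0 := by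
  rw [Subsingleton.eq_univ_of_nonempty hs, Measure.restrict_univ, integral_unique]
  simpa [measureReal_def, volume_pi] using congrArg f (Subsingleton.elim _ _)

theorem simplex_eq_Icc_inter (n : ℕ) (t : ℝ) :
    simplex n t = Icc 0 (fun _ => t) ∩ {u | Monotone u} := by
  ext u
  simp [simplex, Pi.le_def, forall_and, Monotone]

theorem Hperm_eq_setIntegral_orderCone {B : Type*} [NormedRing B] [NormedAlgebra ℝ B]
    (H : ℝ → B) {n : ℕ} (σ : Equiv.Perm (Fin n)) (t : ℝ) :
    Hperm H σ t = ∫ v in Icc 0 (fun _ => t) ∩ orderCone σ, orderedProd H v := by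
  let e := MeasurableEquiv.arrowCongr' σ⁻¹ (MeasurableEquiv.refl ℝ)
  have he (u : Fin n → ℝ) : e u = u ∘ σ := rfl
  have hpre : e ⁻¹' (Icc 0 (fun _ => t) ∩ orderCone σ) = simplex n t := by
    ext u
    have hcomp : (u ∘ σ) ∘ ⇑σ⁻¹ = u := by ext; simp
    simp only [simplex_eq_Icc_inter, mem_preimage, he, mem_inter_iff, orderCone, mem_ofPred_eq,
      mem_Icc, Pi.le_def, Pi.zero_apply, Function.comp_apply, hcomp,
      σ.forall_congr_right (q := fun i => 0 ≤ u i), σ.forall_congr_right (q := fun i => u i ≤ t)]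
  rw [← (volume_preserving_arrowCongr' _ _ (MeasurePreserving.id _)).setIntegral_preimage_emb
    e.measurableEmbedding, hpre]
  rfl

theorem Hn_eq_setIntegral_simplex (H : ℝ → A) (m : ℕ) (t : ℝ) :
    Hn H m t = ∫ u in simplex m t, orderedProd H u := by
  cases m with
  | zero =>
    have hne : (simplex 0 t).Nonempty := ⟨0, by simp [simplex]⟩
    simp [Hn, setIntegral_fin_zero _ hne, orderedProd]
  | succ m => rfl

theorem setIntegral_prod_mul_of_integrableOn {X Y : Type*} [MeasurableSpace X]
    [MeasurableSpace Y] {μ : Measure X} {ν : Measure Y} [SFinite μ] [SFinite ν] {f : X → A}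
    {g : Y → A} {s : Set X} {t : Set Y} (hf : IntegrableOn f s μ) (hg : IntegrableOn g t ν) :
    ∫ z in s ×ˢ t, f z.1 * g z.2 ∂μ.prod ν = (∫ x in s, f x ∂μ) * ∫ y in t, g y ∂ν := by
  rw [← Measure.prod_restrict]
  simpa using integral_prod_bilin (ContinuousLinearMap.mul ℝ A) hf hg

def finAddSplit (a m : ℕ) : (Fin (a + m) → ℝ) ≃ᵐ (Fin a → ℝ) × (Fin m → ℝ) :=
  (MeasurableEquiv.piCongrLeft (fun _ => ℝ) finSumFinEquiv).symm.trans
    (MeasurableEquiv.sumPiEquivProdPi fun _ => ℝ)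

theorem measurePreserving_finAddSplit (a m : ℕ) : MeasurePreserving (finAddSplit a m) :=
  (volume_measurePreserving_sumPiEquivProdPi _).comp
    (volume_measurePreserving_piCongrLeft _ finSumFinEquiv).symm

theorem finAddSplit_apply {a m : ℕ} (v : Fin (a + m) → ℝ) :
    finAddSplit a m v = (fun i => v (Fin.castAdd m i), fun j => v (Fin.natAdd a j)) :=
  rfl

theorem setIntegral_orderedProd_preimage_finAddSplit {H : ℝ → A} (hH : Continuous H) {a m : ℕ}
    {t : ℝ} {s₁ : Set (Fin a → ℝ)} {s₂ : Set (Fin m → ℝ)} (hs₁ : s₁ ⊆ Icc 0 (fun _ => t))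
    (hs₂ : s₂ ⊆ Icc 0 (fun _ => t)) :
    ∫ v in finAddSplit a m ⁻¹' (s₁ ×ˢ s₂), orderedProd H v =
      (∫ x in s₁, orderedProd H x) * ∫ y in s₂, orderedProd H y := by
  simp_rw [orderedProd_append H, ← setIntegral_prod_mul_of_integrableOn
    ((continuous_orderedProd hH a).integrableOn_Icc.mono_set hs₁)
    ((continuous_orderedProd hH m).integrableOn_Icc.mono_set hs₂)]
  exact (measurePreserving_finAddSplit a m).setIntegral_preimage_emb
    (finAddSplit a m).measurableEmbedding (fun p => orderedProd H p.1 * orderedProd H p.2) _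

theorem preimage_finAddSplit_blockMonotone (a : ℕ) (l : List ℕ) (t : ℝ) :
    finAddSplit a l.sum ⁻¹' ((Icc 0 (fun _ => t) ∩ {x | Monotone x}) ×ˢ
        (Icc 0 (fun _ => t) ∩ {y | BlockMonotone (blockBoundaries l) y})) =
      Icc 0 (fun _ => t) ∩ {v | BlockMonotone (blockBoundaries (a :: l)) v} := by
  ext v
  simp only [mem_preimage, finAddSplit_apply, mem_prod, mem_inter_iff, mem_Icc, mem_ofPred_eq,
    Pi.le_def, Pi.zero_apply, blockMonotone_blockBoundaries_cons_iff]
  rw [Fin.forall_fin_add, Fin.forall_fin_add]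
  tauto

theorem prod_Hn_eq_setIntegral {H : ℝ → A} (hH : Continuous H) (t : ℝ) (l : List ℕ) :
    (l.map (Hn H · t)).prod =
      ∫ v in Icc 0 (fun _ => t) ∩ {v : Fin l.sum → ℝ | BlockMonotone (blockBoundaries l) v},
        orderedProd H v := by
  induction l with
  | nil =>
    have hne : (Icc 0 (fun _ => t) ∩
        {v : Fin 0 → ℝ | BlockMonotone (blockBoundaries []) v}).Nonempty :=
      ⟨0, by simp, fun i => i.elim0⟩
    exact (setIntegral_fin_zero (orderedProd H) hne).symm
  | cons a l ih =>
    rw [List.map_cons, List.prod_cons, ih, Hn_eq_setIntegral_simplex, simplex_eq_Icc_inter,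
      ← setIntegral_orderedProd_preimage_finAddSplit hH inter_subset_left inter_subset_left,
      preimage_finAddSplit_blockMonotone]
    rfl

theorem Hn_prod_eq_sum_descents_general (H : ℝ → A) (hH : Continuous H) (t : ℝ)
    (n : ℕ) (c : Composition n) :
    (List.ofFn (fun i : Fin c.length => Hn H (c.blocksFun i) t)).prod =
      ∑ σ ∈ Finset.univ.filter
          (fun σ : Equiv.Perm (Fin n) =>
            descSet σ ⊆ (Finset.Ico 1 c.length).image c.sizeUpTo),
        Hperm H σ t := by
  have hblocks (c : Composition n) :
      List.ofFn (fun i => Hn H (c.blocksFun i) t) = c.blocks.map (Hn H · t) := by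
    rw [← c.ofFn_blocksFun, List.map_ofFn]
    rfl
  obtain ⟨l, -, rfl⟩ := c
  rw [hblocks, prod_Hn_eq_setIntegral hH,
    setIntegral_inter_blockMonotone measurableSet_Icc
      (continuous_orderedProd hH _).integrableOn_Icc]
  exact Finset.sum_congr rfl fun σ _ => (Hperm_eq_setIntegral_orderCone H σ t).symm

/-- for a composition `(n₁,…,n_k)` of `n` (all `n_j ≥ 1`),
`H_{n₁}(t)⋯H_{n_k}(t) = Σ_{σ ∈ S_n, Desc(σ) ⊆ {n₁, n₁+n₂, …, n₁+⋯+n_{k−1}}} H_σ(t)`. -/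
theorem Hn_prod_eq_sum_descents (H : ℝ → A) (hH : Continuous H) (t : ℝ) (ht : 0 ≤ t)
    (n : ℕ) (hn : 1 ≤ n) (c : Composition n) :
    (List.ofFn (fun i : Fin c.length => Hn H (c.blocksFun i) t)).prod =
      ∑ σ ∈ Finset.univ.filter
          (fun σ : Equiv.Perm (Fin n) =>
            descSet σ ⊆ (Finset.Ico 1 c.length).image c.sizeUpTo),
        Hperm H σ t :=
  Hn_prod_eq_sum_descents_general H hH t n c
end

section
/- Let A be a Banach algebra with unit, H : ℝ → A continuous, t ≥ 0, n_1, n_2 ≥ 1, S_1 ⊆ {1,…,n_1−1} and S_2 ⊆ {1,…,n_2−1}. Then H_{D_{=S_1}^{(n_1)}}(t) · H_{D_{=S_2}^{(n_2)}}(t) = H_{D_{=S_1 ∪ (S_2+n_1)}^{(n_1+n_2)}}(t) + H_{D_{=S_1 ∪ \{n_1\} ∪ (S_2+n_1)}^{(n_1+n_2)}}(t), where S_2 + n_1 := {s + n_1 : s ∈ S_2}. -/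
open MeasureTheory

variable {A : Type*} [NormedRing A] [NormedAlgebra ℝ A] [CompleteSpace A]

/-!
Write `F v = H (v 0) ⋯ H (v (n-1))` for a word `v ∈ [0,t]ⁿ`. The substitution `v = u ∘ σ` turns
`H_σ(t)` into the integral of `F` over the cone of words `v` with `v ∘ σ⁻¹` monotone. A word
without repeated letters, which is almost every word, lies in the cone of exactly one `σ`, namely
the inverse of its sorting permutation, and its descent set is then `Desc(σ)`. So `H_{D_{=S}}(t)`
is the integral of `F` over the words in `[0,t]ⁿ` with descent set `S`.
The descent set of a concatenation `v ++ w` consists of the descents of `v`, those of `w` shifted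
by `n₁`, and `n₁` itself when `v ++ w` descends there. Hence concatenation maps the product of the
regions with descent sets `S₁` and `S₂` onto the disjoint union of the regions with descent sets
`S₁ ∪ (S₂ + n₁)` and `S₁ ∪ {n₁} ∪ (S₂ + n₁)`, and Fubini with `F (v ++ w) = F v * F w` concludes.
-/

theorem Fin.append_mk_of_lt {α : Sort*} {m n : ℕ} (v : Fin m → α) (w : Fin n → α) {i : ℕ}
    (h : i < m + n) (hi : i < m) : Fin.append v w ⟨i, h⟩ = v ⟨i, hi⟩ :=
  Fin.append_left v w ⟨i, hi⟩

theorem Fin.append_mk_of_eq_add {α : Sort*} {m n : ℕ} (v : Fin m → α) (w : Fin n → α)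
    {i j : ℕ} (h : i < m + n) (hij : i = m + j) : Fin.append v w ⟨i, h⟩ = w ⟨j, by omega⟩ := by
  subst hij
  exact Fin.append_right v w ⟨j, by omega⟩

theorem Finset.union_union_image_add_eq_iff {n : ℕ} {X Y M N X' Y' : Finset ℕ}
    (hX : ∀ x ∈ X, x < n) (hY : ∀ y ∈ Y, y < n) (hM : M ⊆ {n}) (hN : N ⊆ {n})
    (hX' : 0 ∉ X') (hY' : 0 ∉ Y') :
    X ∪ M ∪ X'.image (· + n) = Y ∪ N ∪ Y'.image (· + n) ↔ X = Y ∧ M = N ∧ X' = Y' := by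
  refine ⟨fun h => ?_, fun ⟨hXY, hMN, hXY'⟩ => by rw [hXY, hMN, hXY']⟩
  have hmem := Finset.ext_iff.1 h
  simp only [Finset.mem_union, Finset.mem_image, Finset.subset_singleton_iff'] at hmem hM hN
  refine ⟨?_, ?_, ?_⟩ <;> ext i
  · grind
  · grind
  · have := hmem (i + n)
    grind

theorem Tuple.monotone_comp_iff_eq_sort {α : Type*} [LinearOrder α] {n : ℕ} {f : Fin n → α}
    (hf : Function.Injective f) {σ : Equiv.Perm (Fin n)} :
    Monotone (f ∘ σ) ↔ σ = Tuple.sort f := by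
  refine ⟨fun h => Tuple.eq_sort_iff.2 ⟨h, fun i j hij hfij => ?_⟩, fun h => h ▸ monotone_sort f⟩
  exact absurd (σ.injective (hf hfij)) hij.ne

/-- `i ∈ wordDescSet v` iff `v i < v (i - 1)`: a descent at position `i` counted from `1`, as in
`descSet`. -/
def wordDescSet {α : Type*} [LinearOrder α] {n : ℕ} (v : Fin n → α) : Finset ℕ :=
  (Finset.Ioo 0 n).filter (fun i => ∃ h : i < n, v ⟨i, h⟩ < v ⟨i - 1, by omega⟩)

theorem descSet_eq_wordDescSet {n : ℕ} (σ : Equiv.Perm (Fin n)) :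
    descSet σ = wordDescSet ⇑σ := by
  simp only [descSet, wordDescSet]

section wordDescSet

variable {α : Type*} [LinearOrder α] {m n : ℕ}

theorem mem_wordDescSet {v : Fin n → α} {i : ℕ} :
    i ∈ wordDescSet v ↔ 0 < i ∧ ∃ h : i < n, v ⟨i, h⟩ < v ⟨i - 1, by omega⟩ := by
  simp only [wordDescSet, Finset.mem_filter, Finset.mem_Ioo]
  exact ⟨fun ⟨⟨h0, _⟩, hv⟩ => ⟨h0, hv⟩, fun ⟨h0, h, hv⟩ => ⟨⟨h0, h⟩, h, hv⟩⟩

theorem lt_of_mem_wordDescSet {v : Fin n → α} {i : ℕ} (hi : i ∈ wordDescSet v) : i < n :=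
  (mem_wordDescSet.1 hi).2.1

theorem zero_notMem_wordDescSet (v : Fin n → α) : 0 ∉ wordDescSet v := fun h =>
  (mem_wordDescSet.1 h).1.false

theorem wordDescSet_comp_strictMono {β : Type*} [LinearOrder β] {g : α → β} (hg : StrictMono g)
    (v : Fin n → α) : wordDescSet (g ∘ v) = wordDescSet v := by
  simp only [wordDescSet, Function.comp_apply, hg.lt_iff_lt]

theorem wordDescSet_eq_descSet_sort_inv {v : Fin n → α} (hv : Function.Injective v) :
    wordDescSet v = descSet (Tuple.sort v)⁻¹ := by
  have hsorted : StrictMono (v ∘ Tuple.sort v) :=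
    (Tuple.monotone_sort v).strictMono_of_injective (hv.comp (Tuple.sort v).injective)
  rw [descSet_eq_wordDescSet, ← wordDescSet_comp_strictMono hsorted]
  congr 1
  ext i
  simp

variable (v : Fin m → α) (w : Fin n → α)

theorem mem_wordDescSet_append_of_lt {i : ℕ} (hi : i < m) :
    i ∈ wordDescSet (Fin.append v w) ↔ i ∈ wordDescSet v := by
  simp only [mem_wordDescSet, hi, (by omega : i < m + n), exists_true_left,
    Fin.append_mk_of_lt v w _ hi, Fin.append_mk_of_lt v w _ (by omega : i - 1 < m)]

theorem mem_wordDescSet_append_self (hm : 0 < m) (hn : 0 < n) :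
    m ∈ wordDescSet (Fin.append v w) ↔ w ⟨0, hn⟩ < v ⟨m - 1, by omega⟩ := by
  simp only [mem_wordDescSet, hm, (by omega : m < m + n), true_and, exists_true_left,
    Fin.append_mk_of_eq_add v w _ (by omega : m = m + 0),
    Fin.append_mk_of_lt v w _ (by omega : m - 1 < m)]

theorem add_mem_wordDescSet_append {j : ℕ} (hj : 0 < j) :
    j + m ∈ wordDescSet (Fin.append v w) ↔ j ∈ wordDescSet w := by
  simp only [mem_wordDescSet, hj, (by omega : 0 < j + m), true_and,
    Fin.append_mk_of_eq_add v w _ (by omega : j + m = m + j),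
    Fin.append_mk_of_eq_add v w _ (by omega : j + m - 1 = m + (j - 1))]
  exact ⟨fun ⟨_, hw⟩ => ⟨by omega, hw⟩, fun ⟨_, hw⟩ => ⟨by omega, hw⟩⟩

theorem wordDescSet_append (hm : 0 < m) (hn : 0 < n) :
    wordDescSet (Fin.append v w) = wordDescSet v ∪
      (if w ⟨0, hn⟩ < v ⟨m - 1, by omega⟩ then {m} else ∅) ∪ (wordDescSet w).image (· + m) := by
  have hv : ∀ i ∈ wordDescSet v, i < m := fun _ => lt_of_mem_wordDescSet
  have hw := zero_notMem_wordDescSet w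
  ext i
  simp only [Finset.mem_union, Finset.mem_image]
  rcases lt_trichotomy i m with hi | rfl | hi
  · rw [mem_wordDescSet_append_of_lt v w hi]
    split_ifs <;> grind
  · rw [mem_wordDescSet_append_self v w hm hn]
    split_ifs <;> grind
  · obtain ⟨j, rfl⟩ : ∃ j, i = j + m := ⟨i - m, by omega⟩
    rw [add_mem_wordDescSet_append v w (by omega)]
    split_ifs <;> grind

theorem wordDescSet_append_eq_or_eq_iff (hm : 0 < m) (hn : 0 < n) {S₁ S₂ : Finset ℕ}
    (hS₁ : S₁ ⊆ Finset.Icc 1 (m - 1)) (hS₂ : S₂ ⊆ Finset.Icc 1 (n - 1)) :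
    (wordDescSet (Fin.append v w) = S₁ ∪ S₂.image (· + m) ∨
      wordDescSet (Fin.append v w) = S₁ ∪ {m} ∪ S₂.image (· + m)) ↔
      wordDescSet v = S₁ ∧ wordDescSet w = S₂ := by
  have hS₁' : ∀ i ∈ S₁, i < m := fun i hi => by have := Finset.mem_Icc.1 (hS₁ hi); omega
  have hS₂' : 0 ∉ S₂ := fun h => by simpa using hS₂ h
  set M : Finset ℕ := if w ⟨0, hn⟩ < v ⟨m - 1, by omega⟩ then {m} else ∅ with hM_def
  have hM : M ⊆ {m} := by rw [hM_def]; split_ifs <;> simp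
  have key := fun N (hN : N ⊆ {m}) => Finset.union_union_image_add_eq_iff (Y := S₁) (N := N)
    (Y' := S₂) (fun _ => lt_of_mem_wordDescSet (v := v)) hS₁' hM hN (zero_notMem_wordDescSet w)
    hS₂'
  have keyA := key ∅ (Finset.empty_subset _)
  rw [Finset.union_empty] at keyA
  rw [wordDescSet_append v w hm hn, ← hM_def, keyA, key {m} subset_rfl]
  rcases Finset.subset_singleton_iff.1 hM with h | h <;> simp [h]

end wordDescSet

theorem MeasurableEquiv.piCongrLeft_perm_symm_apply {ι β : Type*} [MeasurableSpace β]
    (σ : Equiv.Perm ι) (u : ι → β) :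
    MeasurableEquiv.piCongrLeft (fun _ => β) σ.symm u = u ∘ σ := by
  funext i
  obtain ⟨j, rfl⟩ := σ.symm.surjective i
  simp [MeasurableEquiv.coe_piCongrLeft, Equiv.piCongrLeft_apply_apply]

theorem measurePreserving_finAppend (m n : ℕ) :
    MeasurePreserving (fun p : (Fin m → ℝ) × (Fin n → ℝ) => Fin.append p.1 p.2)
      volume volume := by
  convert (volume_measurePreserving_piCongrLeft (fun _ => ℝ) finSumFinEquiv).comp
    (volume_measurePreserving_sumPiEquivProdPi_symm (fun _ : Fin m ⊕ Fin n => ℝ)) using 1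
  ext p i
  obtain ⟨i, rfl⟩ := finSumFinEquiv.surjective i
  rw [MeasurableEquiv.coe_piCongrLeft, Function.comp_apply, Equiv.piCongrLeft_apply_apply]
  cases i <;> simp [MeasurableEquiv.coe_sumPiEquivProdPi_symm]

theorem measurableEmbedding_finAppend (m n : ℕ) :
    MeasurableEmbedding (fun p : (Fin m → ℝ) × (Fin n → ℝ) => Fin.append p.1 p.2) :=
  (Fin.appendHomeomorph m n).measurableEmbedding

theorem volume_setOf_apply_eq_apply {n : ℕ} {i j : Fin n} (hij : i ≠ j) :
    volume {v : Fin n → ℝ | v i = v j} = 0 := by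
  let f : (Fin n → ℝ) →ₗ[ℝ] ℝ := LinearMap.proj (R := ℝ) (φ := fun _ => ℝ) i - LinearMap.proj j
  have hf : f (Pi.single i 1) ≠ 0 := by
    simp [f, LinearMap.sub_apply, Pi.single_eq_of_ne hij.symm]
  have hker : {v : Fin n → ℝ | v i = v j} = LinearMap.ker f := by
    ext v
    simp [f, sub_eq_zero]
  rw [hker]
  exact Measure.addHaar_submodule _ _ fun h =>
    hf (by rw [LinearMap.ker_eq_top.1 h, LinearMap.zero_apply])

theorem ae_injective (n : ℕ) : ∀ᵐ v : Fin n → ℝ, Function.Injective v := by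
  have : ∀ i j : Fin n, ∀ᵐ v : Fin n → ℝ, v i = v j → i = j := fun i j => by
    by_cases hij : i = j
    · exact .of_forall fun _ _ => hij
    · filter_upwards [measure_eq_zero_iff_ae_notMem.1 (volume_setOf_apply_eq_apply hij)]
        with v hv h using absurd h hv
  simpa only [Function.Injective, ae_all_iff] using this

theorem integral_mul_integral_eq_integral_prod {R α β : Type*} [NormedRing R]
    [NormedAlgebra ℝ R] [MeasurableSpace α] [MeasurableSpace β] {μ : Measure α} {ν : Measure β}
    [SFinite μ] [SFinite ν] {f : α → R} {g : β → R} (hf : Integrable f μ) (hg : Integrable g ν) :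
    (∫ x, f x ∂μ) * (∫ y, g y ∂ν) = ∫ z, f z.1 * g z.2 ∂μ.prod ν := by
  rw [integral_prod _ (hf.mul_prod hg)]
  simp_rw [integral_const_mul_of_integrable hg]
  exact (integral_mul_const_of_integrable hf).symm

section regions

variable {n : ℕ}

def permSimplex (σ : Equiv.Perm (Fin n)) (t : ℝ) : Set (Fin n → ℝ) :=
  {v | v ∘ ⇑σ⁻¹ ∈ simplex n t}

def descRegion (n : ℕ) (S : Finset ℕ) (t : ℝ) : Set (Fin n → ℝ) :=
  {v | (∀ i, v i ∈ Set.Icc 0 t) ∧ wordDescSet v = S}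

theorem mem_permSimplex_iff {v : Fin n → ℝ} (hv : Function.Injective v)
    {σ : Equiv.Perm (Fin n)} {t : ℝ} :
    v ∈ permSimplex σ t ↔ (∀ i, v i ∈ Set.Icc 0 t) ∧ σ = (Tuple.sort v)⁻¹ := by
  change (∀ i, 0 ≤ v (σ⁻¹ i) ∧ v (σ⁻¹ i) ≤ t) ∧ Monotone (v ∘ ⇑σ⁻¹) ↔ _
  rw [Tuple.monotone_comp_iff_eq_sort hv, inv_eq_iff_eq_inv, (σ⁻¹).forall_congr_left]
  simp only [Equiv.apply_symm_apply, Set.mem_Icc]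

theorem isClosed_permSimplex (σ : Equiv.Perm (Fin n)) (t : ℝ) :
    IsClosed (permSimplex σ t) := by
  have hsimplex : simplex n t =
      (⋂ i, (fun u : Fin n → ℝ => u i) ⁻¹' Set.Icc 0 t) ∩ {u | Monotone u} := by
    ext
    simp [simplex, Monotone]
  have : IsClosed (simplex n t) := hsimplex ▸
    (isClosed_iInter fun i => isClosed_Icc.preimage (continuous_apply i)).inter isClosed_monotone
  exact this.preimage (by fun_prop)

theorem measurableSet_permSimplex (σ : Equiv.Perm (Fin n)) (t : ℝ) :
    MeasurableSet (permSimplex σ t) :=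
  (isClosed_permSimplex σ t).measurableSet

theorem permSimplex_subset_Icc (σ : Equiv.Perm (Fin n)) (t : ℝ) :
    permSimplex σ t ⊆ Set.Icc 0 (fun _ => t) := fun v hv =>
  ⟨fun i => by simpa using (hv.1 (σ i)).1, fun i => by simpa using (hv.1 (σ i)).2⟩

theorem descRegion_subset_Icc (S : Finset ℕ) (t : ℝ) :
    descRegion n S t ⊆ Set.Icc 0 (fun _ => t) := fun _ hv =>
  ⟨fun i => (hv.1 i).1, fun i => (hv.1 i).2⟩

theorem disjoint_descRegion {S S' : Finset ℕ} (h : S ≠ S') (t : ℝ) :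
    Disjoint (descRegion n S t) (descRegion n S' t) :=
  Set.disjoint_left.2 fun _ hS hS' => h (hS.2.symm.trans hS'.2)

theorem aedisjoint_permSimplex {σ τ : Equiv.Perm (Fin n)} (h : σ ≠ τ) (t : ℝ) :
    AEDisjoint volume (permSimplex σ t) (permSimplex τ t) := by
  refine measure_eq_zero_iff_ae_notMem.2 ?_
  filter_upwards [ae_injective n] with v hv ⟨hσ, hτ⟩
  rw [mem_permSimplex_iff hv] at hσ hτ
  exact h (hσ.2.trans hτ.2.symm)

theorem descRegion_ae_eq_iUnion (S : Finset ℕ) (t : ℝ) :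
    descRegion n S t =ᵐ[volume]
      ⋃ σ : {σ : Equiv.Perm (Fin n) // descSet σ = S}, permSimplex σ.1 t := by
  refine Filter.eventuallyEq_set.2 ?_
  filter_upwards [ae_injective n] with v hv
  simp only [Set.mem_iUnion, mem_permSimplex_iff hv]
  change _ ∧ wordDescSet v = S ↔ _
  rw [wordDescSet_eq_descSet_sort_inv hv]
  exact ⟨fun ⟨hI, hS⟩ => ⟨⟨_, hS⟩, hI, rfl⟩, fun ⟨⟨σ, hσ⟩, hI, h⟩ => ⟨hI, h ▸ hσ⟩⟩

theorem nullMeasurableSet_descRegion (S : Finset ℕ) (t : ℝ) :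
    NullMeasurableSet (descRegion n S t) := by
  have : MeasurableSet (⋃ σ : {σ : Equiv.Perm (Fin n) // descSet σ = S}, permSimplex σ.1 t) :=
    .iUnion fun σ => measurableSet_permSimplex σ.1 t
  exact this.nullMeasurableSet.congr (descRegion_ae_eq_iUnion S t).symm

theorem finAppend_preimage_descRegion_union {m : ℕ} (hm : 0 < m) (hn : 0 < n)
    {S₁ S₂ : Finset ℕ} (hS₁ : S₁ ⊆ Finset.Icc 1 (m - 1)) (hS₂ : S₂ ⊆ Finset.Icc 1 (n - 1))
    (t : ℝ) :
    (fun p : (Fin m → ℝ) × (Fin n → ℝ) => Fin.append p.1 p.2) ⁻¹'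
        (descRegion (m + n) (S₁ ∪ S₂.image (· + m)) t ∪
          descRegion (m + n) (S₁ ∪ {m} ∪ S₂.image (· + m)) t) =
      descRegion m S₁ t ×ˢ descRegion n S₂ t := by
  ext ⟨v, w⟩
  simp only [Set.mem_preimage, Set.mem_union, Set.mem_prod, descRegion, Set.mem_ofPred_eq,
    ← and_or_left, Fin.forall_fin_add, Fin.append_left, Fin.append_right,
    wordDescSet_append_eq_or_eq_iff v w hm hn hS₁ hS₂]
  tauto

end regions

def Hprod {M : Type*} [Monoid M] (H : ℝ → M) {n : ℕ} (v : Fin n → ℝ) : M :=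
  (List.ofFn fun j => H (v j)).prod

section Hprod

variable {R : Type*} [NormedRing R]

theorem Hprod_append {M : Type*} [Monoid M] (H : ℝ → M) {m n : ℕ} (v : Fin m → ℝ)
    (w : Fin n → ℝ) : Hprod H (Fin.append v w) = Hprod H v * Hprod H w := by
  have hleft : ∀ i : Fin m, Fin.append v w (Fin.castLE (by omega) i) = v i := Fin.append_left v w
  rw [Hprod, Hprod, Hprod, List.ofFn_add, List.prod_append]
  simp only [hleft, Fin.append_right]

theorem continuous_Hprod {M : Type*} [Monoid M] [TopologicalSpace M] [ContinuousMul M]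
    {H : ℝ → M} (hH : Continuous H) (n : ℕ) : Continuous (Hprod H : (Fin n → ℝ) → M) := by
  unfold Hprod
  simp only [List.ofFn_eq_map]
  exact continuous_list_prod _ fun i _ => hH.comp (continuous_apply i)

theorem integrableOn_Hprod {H : ℝ → R} (hH : Continuous H) {n : ℕ} {s : Set (Fin n → ℝ)}
    {t : ℝ} (hs : s ⊆ Set.Icc 0 (fun _ => t)) : IntegrableOn (Hprod H) s :=
  ((continuous_Hprod hH n).continuousOn.integrableOn_compact isCompact_Icc).mono_set hs

variable [NormedAlgebra ℝ R]

theorem Hperm_eq_setIntegral_permSimplex (H : ℝ → R) {n : ℕ} (σ : Equiv.Perm (Fin n))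
    (t : ℝ) : Hperm H σ t = ∫ v in permSimplex σ t, Hprod H v := by
  rw [← (volume_measurePreserving_piCongrLeft (fun _ => ℝ) σ.symm).setIntegral_preimage_emb
    (MeasurableEquiv.measurableEmbedding _)]
  have hpre : MeasurableEquiv.piCongrLeft (fun _ => ℝ) σ.symm ⁻¹' permSimplex σ t =
      simplex n t := by
    ext u
    simp [permSimplex, MeasurableEquiv.piCongrLeft_perm_symm_apply, Function.comp_assoc]
  simp only [hpre, MeasurableEquiv.piCongrLeft_perm_symm_apply]
  rfl

theorem sum_Hperm_eq_setIntegral_descRegion {H : ℝ → R} (hH : Continuous H) (n : ℕ)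
    (S : Finset ℕ) (t : ℝ) :
    ∑ σ ∈ Finset.univ.filter (fun σ : Equiv.Perm (Fin n) => descSet σ = S), Hperm H σ t =
      ∫ v in descRegion n S t, Hprod H v := by
  rw [setIntegral_congr_set (descRegion_ae_eq_iUnion S t), integral_iUnion_ae ?meas ?disj ?int,
    tsum_fintype]
  case meas => exact fun σ => (measurableSet_permSimplex σ.1 t).nullMeasurableSet
  case disj => exact fun σ τ h => aedisjoint_permSimplex (Subtype.coe_injective.ne h) t
  case int =>
    exact integrableOn_Hprod hH (Set.iUnion_subset fun σ => permSimplex_subset_Icc σ.1 t)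
  simp_rw [Hperm_eq_setIntegral_permSimplex]
  exact Finset.sum_subtype _ (fun σ => by simp) _

theorem setIntegral_descRegion_mul {H : ℝ → R} (hH : Continuous H) {m n : ℕ} (hm : 0 < m)
    (hn : 0 < n) {S₁ S₂ : Finset ℕ} (hS₁ : S₁ ⊆ Finset.Icc 1 (m - 1))
    (hS₂ : S₂ ⊆ Finset.Icc 1 (n - 1)) (t : ℝ) :
    (∫ v in descRegion m S₁ t, Hprod H v) * (∫ w in descRegion n S₂ t, Hprod H w) =
      (∫ u in descRegion (m + n) (S₁ ∪ S₂.image (· + m)) t, Hprod H u) +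
        ∫ u in descRegion (m + n) (S₁ ∪ {m} ∪ S₂.image (· + m)) t, Hprod H u := by
  have hne : S₁ ∪ S₂.image (· + m) ≠ S₁ ∪ {m} ∪ S₂.image (· + m) := by
    refine (ne_of_mem_of_not_mem' (a := m) (by simp) ?_).symm
    simp only [Finset.mem_union, Finset.mem_image, not_or, not_exists, not_and]
    exact ⟨fun h => by have := Finset.mem_Icc.1 (hS₁ h); omega,
      fun x hx => by have := Finset.mem_Icc.1 (hS₂ hx); omega⟩
  rw [integral_mul_integral_eq_integral_prod (integrableOn_Hprod hH (descRegion_subset_Icc _ _))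
      (integrableOn_Hprod hH (descRegion_subset_Icc _ _)), Measure.prod_restrict,
    ← Measure.volume_eq_prod, ← finAppend_preimage_descRegion_union hm hn hS₁ hS₂ t]
  simp_rw [← Hprod_append]
  rw [(measurePreserving_finAppend m n).setIntegral_preimage_emb
      (measurableEmbedding_finAppend m n),
    setIntegral_union₀ (disjoint_descRegion hne t).aedisjoint (nullMeasurableSet_descRegion _ t)
      (integrableOn_Hprod hH (descRegion_subset_Icc _ _))
      (integrableOn_Hprod hH (descRegion_subset_Icc _ _))]

end Hprod

theorem HDeq_mul_HDeq_general (H : ℝ → A) (hH : Continuous H) (t : ℝ)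
    (n₁ n₂ : ℕ) (h₁ : 1 ≤ n₁) (h₂ : 1 ≤ n₂)
    (S₁ S₂ : Finset ℕ) (hS₁ : S₁ ⊆ Finset.Icc 1 (n₁ - 1)) (hS₂ : S₂ ⊆ Finset.Icc 1 (n₂ - 1)) :
    (∑ σ ∈ Finset.univ.filter
        (fun σ : Equiv.Perm (Fin n₁) => descSet σ = S₁), Hperm H σ t) *
      (∑ τ ∈ Finset.univ.filter
        (fun τ : Equiv.Perm (Fin n₂) => descSet τ = S₂), Hperm H τ t) =
      (∑ ρ ∈ Finset.univ.filter
          (fun ρ : Equiv.Perm (Fin (n₁ + n₂)) =>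
            descSet ρ = S₁ ∪ S₂.image (· + n₁)),
        Hperm H ρ t) +
      (∑ ρ ∈ Finset.univ.filter
          (fun ρ : Equiv.Perm (Fin (n₁ + n₂)) =>
            descSet ρ = S₁ ∪ {n₁} ∪ S₂.image (· + n₁)),
        Hperm H ρ t) := by
  simp only [sum_Hperm_eq_setIntegral_descRegion hH]
  exact setIntegral_descRegion_mul hH h₁ h₂ hS₁ hS₂ t

/-- `H_{D_{=S₁}^{(n₁)}}(t) · H_{D_{=S₂}^{(n₂)}}(t)
= H_{D_{=S₁ ∪ (S₂+n₁)}^{(n₁+n₂)}}(t) + H_{D_{=S₁ ∪ {n₁} ∪ (S₂+n₁)}^{(n₁+n₂)}}(t)`. -/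
theorem HDeq_mul_HDeq (H : ℝ → A) (hH : Continuous H) (t : ℝ) (ht : 0 ≤ t)
    (n₁ n₂ : ℕ) (h₁ : 1 ≤ n₁) (h₂ : 1 ≤ n₂)
    (S₁ S₂ : Finset ℕ) (hS₁ : S₁ ⊆ Finset.Icc 1 (n₁ - 1)) (hS₂ : S₂ ⊆ Finset.Icc 1 (n₂ - 1)) :
    (∑ σ ∈ Finset.univ.filter
        (fun σ : Equiv.Perm (Fin n₁) => descSet σ = S₁), Hperm H σ t) *
      (∑ τ ∈ Finset.univ.filter
        (fun τ : Equiv.Perm (Fin n₂) => descSet τ = S₂), Hperm H τ t) =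
      (∑ ρ ∈ Finset.univ.filter
          (fun ρ : Equiv.Perm (Fin (n₁ + n₂)) =>
            descSet ρ = S₁ ∪ S₂.image (· + n₁)),
        Hperm H ρ t) +
      (∑ ρ ∈ Finset.univ.filter
          (fun ρ : Equiv.Perm (Fin (n₁ + n₂)) =>
            descSet ρ = S₁ ∪ {n₁} ∪ S₂.image (· + n₁)),
        Hperm H ρ t) :=
  HDeq_mul_HDeq_general H hH t n₁ n₂ h₁ h₂ S₁ S₂ hS₁ hS₂
end

section
/- Let A be an associative unital ℚ-algebra and let (a_n)_{n≥0} and (b_n)_{n≥1} be sequences in A with a_0 = 1 satisfying the recursion n·a_n = Σ_{i=1}^{n} a_{n−i}·b_i for all n ≥ 1. Then for every n ≥ 1: a_n = Σ_{l ≤ n} Σ_{k_1+⋯+k_l = n, k_i > 0} b_{k_1}·b_{k_2}⋯b_{k_l} / (k_1(k_1+k_2)⋯(k_1+⋯+k_l)), the inner sum being over all compositions (k_1,…,k_l) of n. -/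
/-!
Both sides satisfy the same recursion with the same value at `0`, and the recursion determines
the sequence because multiplication by `n ≥ 1` is injective in a `ℚ`-algebra. For the sum over
compositions, split off the last block `k_l = i` of a composition of `n`: since the last partial
sum `k₁ + ⋯ + k_l` is `n`, the term of the composition is `n⁻¹` times the term of the remaining
composition of `n - i`, multiplied by `b i`.
-/

open Finset

namespace Composition

variable {n : ℕ}

theorem blocks_ne_nil_of_pos (c : Composition n) (hn : 0 < n) : c.blocks ≠ [] :=
  List.ne_nil_of_length_pos (c.length_pos_of_pos hn)

theorem sum_dropLast_add_getLast (c : Composition n) (h : c.blocks ≠ []) :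
    c.blocks.dropLast.sum + c.blocks.getLast h = n := by
  rw [← List.sum_concat, List.concat_eq_append, List.dropLast_append_getLast, c.blocks_sum]

theorem heq_of_blocks_eq {m m' : ℕ} {c : Composition m} {c' : Composition m'}
    (h : c.blocks = c'.blocks) : c ≍ c' := by
  obtain rfl : m = m' := by rw [← c.blocks_sum, ← c'.blocks_sum, h]
  exact heq_of_eq (Composition.ext h)

def sigmaLastBlockEquiv (hn : 1 ≤ n) :
    (Σ i : Icc 1 n, Composition (n - i)) ≃ Composition n where
  toFun p :=
    have hi := mem_Icc.1 p.1.2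
    ⟨p.2.blocks ++ [(p.1 : ℕ)], by
      simp only [List.mem_append, List.mem_singleton]
      rintro _ (h | rfl)
      exacts [p.2.blocks_pos h, hi.1], by simp; omega⟩
  invFun c :=
    have h := c.blocks_ne_nil_of_pos hn
    have hsum := c.sum_dropLast_add_getLast h
    have hpos := c.blocks_pos (List.getLast_mem h)
    ⟨⟨c.blocks.getLast h, mem_Icc.2 ⟨hpos, by omega⟩⟩,
      ⟨c.blocks.dropLast, fun hi => c.blocks_pos (List.mem_of_mem_dropLast hi),
        show _ = n - c.blocks.getLast h by omega⟩⟩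
  left_inv := by
    rintro ⟨⟨i, hi⟩, c⟩
    exact Sigma.ext (Subtype.ext List.getLast_concat) (heq_of_blocks_eq List.dropLast_concat)
  right_inv c := Composition.ext (List.dropLast_concat_getLast _)

theorem sum_eq_sum_Icc_sum_append_singleton {M : Type*} [AddCommMonoid M] (hn : 1 ≤ n)
    (f : List ℕ → M) :
    ∑ c : Composition n, f c.blocks =
      ∑ i ∈ Icc 1 n, ∑ c : Composition (n - i), f (c.blocks ++ [i]) := by
  rw [← (sigmaLastBlockEquiv hn).sum_comp, ← univ_sigma_univ, sum_sigma,
    ← sum_coe_sort (Icc 1 n)]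
  rfl

theorem sum_zero {M : Type*} [AddCommMonoid M] (f : List ℕ → M) :
    ∑ c : Composition 0, f c.blocks = f [] := by
  rw [Fintype.sum_eq_single (ones 0) fun c hc =>
    (hc (eq_ones_iff_le_length.2 c.length.zero_le)).elim]
  rfl

end Composition

theorem eq_of_recursion {A : Type*} [NonUnitalNonAssocSemiring A] [IsAddTorsionFree A]
    {a a' b : ℕ → A} (h0 : a 0 = a' 0)
    (hrec : ∀ n, 1 ≤ n → n • a n = ∑ i ∈ Icc 1 n, a (n - i) * b i)
    (hrec' : ∀ n, 1 ≤ n → n • a' n = ∑ i ∈ Icc 1 n, a' (n - i) * b i) : a = a' := by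
  funext n
  induction n using Nat.strong_induction_on with
  | _ n ih =>
    rcases Nat.eq_zero_or_pos n with rfl | hn
    · exact h0
    refine nsmul_right_injective hn.ne' ?_
    simp only [hrec n hn, hrec' n hn]
    exact sum_congr rfl fun i hi => by rw [ih (n - i) (by grind)]

section CompositionSum

variable {A : Type*} [Ring A] [Algebra ℚ A] (b : ℕ → A)

noncomputable def compositionTerm (l : List ℕ) : A :=
  (∏ i ∈ range l.length, ((l.take (i + 1)).sum : ℚ))⁻¹ • (l.map b).prod

theorem compositionTerm_nil : compositionTerm b [] = 1 := by
  simp [compositionTerm]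

theorem compositionTerm_append_singleton (l : List ℕ) (i : ℕ) :
    compositionTerm b (l ++ [i]) = ((l.sum + i : ℕ) : ℚ)⁻¹ • (compositionTerm b l * b i) := by
  have hprefix : ∀ j ∈ range l.length,
      (((l ++ [i]).take (j + 1)).sum : ℚ) = ((l.take (j + 1)).sum : ℚ) := by
    intro j hj
    rw [List.take_append_of_le_length (by simpa using mem_range.1 hj)]
  simp only [compositionTerm, List.length_append, List.length_singleton, prod_range_succ,
    prod_congr rfl hprefix]
  rw [List.take_of_length_le (by simp), List.map_append, List.prod_append, List.map_singleton,
    List.prod_singleton, List.sum_append, List.sum_singleton, mul_inv, mul_comm, mul_smul,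
    smul_mul_assoc]

theorem compositionTerm_blocks {n : ℕ} (c : Composition n) :
    compositionTerm b c.blocks = (∏ i ∈ range c.length, (c.sizeUpTo (i + 1) : ℚ))⁻¹ •
      (List.ofFn (fun i : Fin c.length => b (c.blocksFun i))).prod := by
  rw [compositionTerm, ← c.ofFn_blocksFun, List.map_ofFn, c.ofFn_blocksFun]
  rfl

noncomputable def compositionSum (n : ℕ) : A :=
  ∑ c : Composition n, compositionTerm b c.blocks

theorem compositionSum_zero : compositionSum b 0 = 1 := by
  rw [compositionSum, Composition.sum_zero, compositionTerm_nil]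

theorem nsmul_compositionSum {n : ℕ} (hn : 1 ≤ n) :
    n • compositionSum b n = ∑ i ∈ Icc 1 n, compositionSum b (n - i) * b i := by
  have hn' : (n : ℚ) ≠ 0 := Nat.cast_ne_zero.2 (by omega)
  have hlast : ∀ i ∈ Icc 1 n, ∀ c : Composition (n - i),
      compositionTerm b (c.blocks ++ [i]) = (n : ℚ)⁻¹ • (compositionTerm b c.blocks * b i) := by
    intro i hi c
    rw [compositionTerm_append_singleton, c.blocks_sum, Nat.sub_add_cancel (mem_Icc.1 hi).2]
  rw [compositionSum, Composition.sum_eq_sum_Icc_sum_append_singleton hn,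
    ← Nat.cast_smul_eq_nsmul ℚ, smul_sum]
  refine sum_congr rfl fun i hi => ?_
  rw [sum_congr rfl fun c _ => hlast i hi c, ← smul_sum, smul_inv_smul₀ hn', compositionSum,
    sum_mul]

end CompositionSum

/-- if `a₀ = 1` and `n·aₙ = Σ_{i=1}^n a_{n−i}·b_i` in a unital
associative `ℚ`-algebra, then
`aₙ = Σ_{k₁+⋯+k_l=n, k_i>0} b_{k₁}⋯b_{k_l}/(k₁(k₁+k₂)⋯(k₁+⋯+k_l))`,
the sum being over all compositions of `n`. -/
theorem recursion_solution_compositions {A : Type*} [Ring A] [Algebra ℚ A]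
    (a b : ℕ → A) (ha0 : a 0 = 1)
    (hrec : ∀ n : ℕ, 1 ≤ n → n • a n = ∑ i ∈ Finset.Icc 1 n, a (n - i) * b i) :
    ∀ n : ℕ, 1 ≤ n →
      a n = ∑ c : Composition n,
        (∏ i ∈ Finset.range c.length, (c.sizeUpTo (i + 1) : ℚ))⁻¹ •
          (List.ofFn (fun i : Fin c.length => b (c.blocksFun i))).prod := by
  intro n _
  have : IsAddTorsionFree A := .of_module_rat A
  rw [eq_of_recursion (ha0.trans (compositionSum_zero b).symm) hrec
    (fun m hm => nsmul_compositionSum b hm)]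
  exact sum_congr rfl fun c _ => compositionTerm_blocks b c
end

section
/- Let a, b ≥ 1, S_1 ⊆ {1,…,a−1} and S_2 ⊆ {1,…,b−1}. Then in ℚ[S_{a+b}]: D_{=S_1}^{(a)} ⋆ D_{=S_2}^{(b)} = D_{=S_1 ∪ (S_2+a)}^{(a+b)} + D_{=S_1 ∪ \{a\} ∪ (S_2+a)}^{(a+b)}, where ⋆ is the convolution product and S_2 + a := {s + a : s ∈ S_2}. -/
/-- The Solomon element `D_S^{(n)} = Σ_{σ ∈ S_n, Desc(σ) ⊆ S} σ` of `ℚ[S_n]`. -/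
noncomputable def Dle (n : ℕ) (S : Finset ℕ) : MonoidAlgebra ℚ (Equiv.Perm (Fin n)) :=
  ∑ σ ∈ Finset.univ.filter (fun σ : Equiv.Perm (Fin n) => descSet σ ⊆ S),
    MonoidAlgebra.single σ (1 : ℚ)

/-- The Solomon element `D_{=S}^{(n)} = Σ_{σ ∈ S_n, Desc(σ) = S} σ` of `ℚ[S_n]`. -/
noncomputable def Deq (n : ℕ) (S : Finset ℕ) : MonoidAlgebra ℚ (Equiv.Perm (Fin n)) :=
  ∑ σ ∈ Finset.univ.filter (fun σ : Equiv.Perm (Fin n) => descSet σ = S),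
    MonoidAlgebra.single σ (1 : ℚ)

/-- `σ×τ ∈ S_{a+b}`: acts as `σ` on `{1,…,a}` and as `a+τ(·−a)` on `{a+1,…,a+b}`. -/
def mulPerm {a b : ℕ} (σ : Equiv.Perm (Fin a)) (τ : Equiv.Perm (Fin b)) :
    Equiv.Perm (Fin (a + b)) :=
  (finSumFinEquiv (m := a) (n := b)).permCongr (Equiv.Perm.sumCongr σ τ)

/-- `ζ ∈ Sh(a,b)`: `ζ(1) < ⋯ < ζ(a)` and `ζ(a+1) < ⋯ < ζ(a+b)`. -/
def IsShuffle (a b : ℕ) (ζ : Equiv.Perm (Fin (a + b))) : Prop :=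
  (∀ i j : Fin (a + b), i < j → (j : ℕ) < a → ζ i < ζ j) ∧
  (∀ i j : Fin (a + b), i < j → a ≤ (i : ℕ) → ζ i < ζ j)

open Classical in
/-- The convolution product `⋆ : ℚ[S_a] × ℚ[S_b] → ℚ[S_{a+b}]`, the bilinear map
determined by `σ ⋆ τ = Σ_{ζ ∈ Sh(a,b)} ζ∘(σ×τ)`. -/
noncomputable def conv {a b : ℕ} (u : MonoidAlgebra ℚ (Equiv.Perm (Fin a)))
    (v : MonoidAlgebra ℚ (Equiv.Perm (Fin b))) :
    MonoidAlgebra ℚ (Equiv.Perm (Fin (a + b))) :=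
  ∑ σ ∈ u.coeff.support, ∑ τ ∈ v.coeff.support,
    (u.coeff σ * v.coeff τ) •
      ∑ ζ ∈ Finset.univ.filter (fun ζ => IsShuffle a b ζ),
        MonoidAlgebra.single (ζ * mulPerm σ τ) (1 : ℚ)

/-- The canonical identification `ℚ[S_m] → ℚ[S_n]` for `m = n`. -/
noncomputable def acast {m n : ℕ} (h : m = n)
    (u : MonoidAlgebra ℚ (Equiv.Perm (Fin m))) :
    MonoidAlgebra ℚ (Equiv.Perm (Fin n)) :=
  MonoidAlgebra.ofCoeff (Finsupp.mapDomain (fun σ => (finCongr h).permCongr σ) u.coeff)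

/-- The Dynkin element `𝒟_m = Σ_{j=0}^{m−1} (−1)^j D_{={1,…,j}}^{(m)}` of `ℚ[S_m]`. -/
noncomputable def DynE (m : ℕ) : MonoidAlgebra ℚ (Equiv.Perm (Fin m)) :=
  ∑ j ∈ Finset.range m, (-1 : ℚ) ^ j • Deq m (Finset.Icc 1 j)

/-!
Every `π ∈ S_{a+b}` factors uniquely as `ζ ∘ (σ × τ)` with `ζ` a shuffle: `ζ` is the shuffle
sending `{1,…,a}` onto `π({1,…,a})`. Since `ζ` is increasing on both blocks, `π` has the descents
of `σ` at the positions below `a` and those of `τ`, shifted by `a`, above `a`, while position `a`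
is unconstrained. Hence the left-hand side is the sum of all `π` whose descent set agrees with
`S₁ ∪ (S₂ + a)` away from `a`, which is the right-hand side.
-/

open Finset Function Equiv

lemma mem_descSet {n : ℕ} (π : Perm (Fin n)) (i : ℕ) :
    i ∈ descSet π ↔ 0 < i ∧ ∃ h : i < n, π ⟨i, h⟩ < π ⟨i - 1, by omega⟩ := by
  classical
  simp only [descSet, mem_filter, mem_Ioo]
  exact ⟨fun ⟨⟨h0, _⟩, h⟩ => ⟨h0, h⟩, fun ⟨h0, h, hlt⟩ => ⟨⟨h0, h⟩, h, hlt⟩⟩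

lemma pos_and_lt_of_mem_descSet {n : ℕ} {π : Perm (Fin n)} {i : ℕ} (h : i ∈ descSet π) :
    0 < i ∧ i < n :=
  mem_Ioo.1 (filter_subset _ _ h)

lemma add_mem_descSet_iff {m n c : ℕ} {π : Perm (Fin n)} {ρ : Perm (Fin m)}
    {e g : Fin m → Fin n} (he : ∀ k, (e k : ℕ) = k + c) (hg : StrictMono g)
    (hπ : ∀ k, π (e k) = g (ρ k)) {i : ℕ} (hi₀ : 0 < i) (hi : i < m) :
    i + c ∈ descSet π ↔ i ∈ descSet ρ := by
  have hic : i + c < n := he ⟨i, hi⟩ ▸ (e ⟨i, hi⟩).2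
  have e₀ : (⟨i + c, hic⟩ : Fin n) = e ⟨i, hi⟩ := Fin.ext (he ⟨i, hi⟩).symm
  have e₁ : (⟨i + c - 1, by omega⟩ : Fin n) = e ⟨i - 1, by omega⟩ := by
    ext; rw [he]; simp; omega
  simp only [mem_descSet, hi₀, hic, hi, true_and, exists_true_left, e₀, e₁, hπ,
    hg.lt_iff_lt, Nat.add_pos_left hi₀]

lemma Finset.erase_eq_iff_of_notMem {α : Type*} [DecidableEq α] {s t : Finset α} {a : α}
    (ht : a ∉ t) : s.erase a = t ↔ s = t ∨ s = insert a t := by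
  by_cases hs : a ∈ s
  · rw [erase_eq_iff_eq_insert hs ht, or_iff_right (by rintro rfl; exact ht hs)]
  · rw [erase_eq_of_notMem hs, or_iff_left (by rintro rfl; exact hs (mem_insert_self a t))]

lemma union_image_add_eq_union_image_add_iff {a : ℕ} {D₁ D₂ S₁ S₂ : Finset ℕ}
    (hD₁ : ∀ i ∈ D₁, i < a) (hS₁ : ∀ i ∈ S₁, i < a) :
    D₁ ∪ D₂.image (· + a) = S₁ ∪ S₂.image (· + a) ↔ D₁ = S₁ ∧ D₂ = S₂ := by
  have low : ∀ X Y : Finset ℕ, (∀ i ∈ X, i < a) → (X ∪ Y.image (· + a)).filter (· < a) = X :=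
    fun X Y hX => by
      rw [filter_union, filter_true_of_mem hX, filter_false_of_mem (by simp), union_empty]
  have high : ∀ X Y : Finset ℕ, (∀ i ∈ X, i < a) →
      (X ∪ Y.image (· + a)).filter (a ≤ ·) = Y.image (· + a) := fun X Y hX => by
    rw [filter_union, filter_false_of_mem (fun i hi => by have := hX i hi; omega),
      filter_true_of_mem (by simp), empty_union]
  refine ⟨fun h => ⟨?_, image_injective (add_left_injective a) ?_⟩, fun ⟨h₁, h₂⟩ => h₁ ▸ h₂ ▸ rfl⟩
  · rw [← low D₁ D₂ hD₁, h, low S₁ S₂ hS₁]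
  · rw [← high D₁ D₂ hD₁, h, high S₁ S₂ hS₁]

lemma exists_perm_orderEmbOfFin_eq {α : Type*} [LinearOrder α] {k : ℕ} (B : Finset α)
    (hB : #B = k) {f : Fin k → α} (hf : Injective f) (hfB : ∀ i, f i ∈ B) :
    ∃ ρ : Perm (Fin k), ∀ i, B.orderEmbOfFin hB (ρ i) = f i := by
  let g : Fin k → Fin k := fun i => (B.orderIsoOfFin hB).symm ⟨f i, hfB i⟩
  have hg : Injective g := fun i j h => hf (by simpa [g] using h)
  exact ⟨Equiv.ofBijective g (Finite.injective_iff_bijective.mp hg), fun i => by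
    simp [g, ← coe_orderIsoOfFin_apply]⟩

section Shuffle

variable {a b : ℕ}

lemma isShuffle_iff {ζ : Perm (Fin (a + b))} :
    IsShuffle a b ζ ↔ StrictMono (ζ ∘ Fin.castAdd b) ∧ StrictMono (ζ ∘ Fin.natAdd a) := by
  constructor
  · rintro ⟨hl, hr⟩
    exact ⟨fun i j hij => hl _ _ hij (by simp),
      fun i j hij => hr _ _ (by simpa using hij) (by simp)⟩
  · rintro ⟨hl, hr⟩
    refine ⟨fun i j hij hj => ?_, fun i j hij hi => ?_⟩
    · exact hl (show (⟨i, by omega⟩ : Fin a) < ⟨j, hj⟩ from hij)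
    · have hj : a ≤ (j : ℕ) := by rw [Fin.lt_def] at hij; omega
      have ei : i = Fin.natAdd a ⟨i - a, by omega⟩ := Fin.ext (by simp; omega)
      have ej : j = Fin.natAdd a ⟨j - a, by omega⟩ := Fin.ext (by simp; omega)
      rw [ei, ej]
      exact hr (by rw [Fin.lt_def] at hij ⊢; simp; omega)

lemma mulPerm_castAdd (σ : Perm (Fin a)) (τ : Perm (Fin b)) (i : Fin a) :
    mulPerm σ τ (Fin.castAdd b i) = Fin.castAdd b (σ i) := by
  simp [mulPerm, Equiv.permCongr_apply]

lemma mulPerm_natAdd (σ : Perm (Fin a)) (τ : Perm (Fin b)) (j : Fin b) :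
    mulPerm σ τ (Fin.natAdd a j) = Fin.natAdd a (τ j) := by
  simp [mulPerm, Equiv.permCongr_apply]

lemma mulPerm_injective : Injective2 (mulPerm (a := a) (b := b)) := by
  intro σ σ' τ τ' h
  have h' : Perm.sumCongrHom _ _ (σ, τ) = Perm.sumCongrHom _ _ (σ', τ') :=
    finSumFinEquiv.permCongr.injective h
  simpa using Perm.sumCongrHom_injective h'

lemma erase_descSet_mul_mulPerm {ζ : Perm (Fin (a + b))} (hζ : IsShuffle a b ζ)
    (σ : Perm (Fin a)) (τ : Perm (Fin b)) :
    (descSet (ζ * mulPerm σ τ)).erase a = descSet σ ∪ (descSet τ).image (· + a) := by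
  obtain ⟨hl, hr⟩ := isShuffle_iff.1 hζ
  have hσ : ∀ i < a, i ∈ descSet (ζ * mulPerm σ τ) ↔ i ∈ descSet σ := by
    intro i hi
    rcases Nat.eq_zero_or_pos i with rfl | hi₀
    · exact iff_of_false (fun h => (pos_and_lt_of_mem_descSet h).1.false)
        (fun h => (pos_and_lt_of_mem_descSet h).1.false)
    · exact add_mem_descSet_iff (c := 0) (e := Fin.castAdd b) (fun _ => rfl) hl
        (fun k => by simp [mulPerm_castAdd]) hi₀ hi
  have hτ : ∀ j, 0 < j → (j + a ∈ descSet (ζ * mulPerm σ τ) ↔ j ∈ descSet τ) := by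
    intro j hj₀
    by_cases hj : j < b
    · exact add_mem_descSet_iff (e := Fin.natAdd a) (fun k => by simp [add_comm]) hr
        (fun k => by simp [mulPerm_natAdd]) hj₀ hj
    · exact iff_of_false (fun h => by have := (pos_and_lt_of_mem_descSet h).2; omega)
        (fun h => hj (pos_and_lt_of_mem_descSet h).2)
  have hσa : ∀ i ∈ descSet σ, i < a := fun i h => (pos_and_lt_of_mem_descSet h).2
  have hτ₀ : ∀ j ∈ descSet τ, 0 < j := fun j h => (pos_and_lt_of_mem_descSet h).1
  ext i
  simp only [mem_erase, mem_union, mem_image]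
  rcases lt_trichotomy i a with h | rfl | h
  · rw [hσ i h, or_iff_left (by rintro ⟨j, -, rfl⟩; omega)]
    exact and_iff_right h.ne
  · refine iff_of_false (fun h => h.1 rfl) ?_
    rintro (h | ⟨j, hj, hja⟩)
    · exact (hσa _ h).false
    · have := hτ₀ j hj; omega
  · obtain ⟨j, rfl⟩ : ∃ j, i = j + a := ⟨i - a, by omega⟩
    rw [hτ j (by omega), or_iff_right (fun h' => by have := hσa _ h'; omega)]
    simp only [add_left_inj, exists_eq_right]
    exact and_iff_right h.ne'

lemma range_mul_mulPerm_comp_castAdd (ζ : Perm (Fin (a + b))) (σ : Perm (Fin a))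
    (τ : Perm (Fin b)) :
    Set.range ((ζ * mulPerm σ τ) ∘ Fin.castAdd b) = Set.range (ζ ∘ Fin.castAdd b) := by
  have : (ζ * mulPerm σ τ) ∘ Fin.castAdd b = (ζ ∘ Fin.castAdd b) ∘ σ :=
    funext fun i => by simp [mulPerm_castAdd]
  rw [this, EquivLike.range_comp]

lemma range_mul_mulPerm_comp_natAdd (ζ : Perm (Fin (a + b))) (σ : Perm (Fin a))
    (τ : Perm (Fin b)) :
    Set.range ((ζ * mulPerm σ τ) ∘ Fin.natAdd a) = Set.range (ζ ∘ Fin.natAdd a) := by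
  have : (ζ * mulPerm σ τ) ∘ Fin.natAdd a = (ζ ∘ Fin.natAdd a) ∘ τ :=
    funext fun j => by simp [mulPerm_natAdd]
  rw [this, EquivLike.range_comp]

lemma IsShuffle.eq_of_mul_mulPerm_eq {ζ ζ' : Perm (Fin (a + b))} (hζ : IsShuffle a b ζ)
    (hζ' : IsShuffle a b ζ') {σ σ' : Perm (Fin a)} {τ τ' : Perm (Fin b)}
    (h : ζ * mulPerm σ τ = ζ' * mulPerm σ' τ') : ζ = ζ' := by
  obtain ⟨hl, hr⟩ := isShuffle_iff.1 hζ
  obtain ⟨hl', hr'⟩ := isShuffle_iff.1 hζ'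
  have hL : ζ ∘ Fin.castAdd b = ζ' ∘ Fin.castAdd b := (hl.range_inj hl').1 <| by
    rw [← range_mul_mulPerm_comp_castAdd ζ σ τ, h, range_mul_mulPerm_comp_castAdd]
  have hR : ζ ∘ Fin.natAdd a = ζ' ∘ Fin.natAdd a := (hr.range_inj hr').1 <| by
    rw [← range_mul_mulPerm_comp_natAdd ζ σ τ, h, range_mul_mulPerm_comp_natAdd]
  exact Equiv.ext fun x => Fin.addCases (congrFun hL) (congrFun hR) x

noncomputable def shuffleOf (A : Finset (Fin (a + b))) (hA : #A = a) (hAc : #Aᶜ = b) :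
    Perm (Fin (a + b)) :=
  finSumFinEquiv.symm.trans ((Equiv.sumCongr (A.orderIsoOfFin hA).toEquiv
    ((Aᶜ.orderIsoOfFin hAc).toEquiv.trans
      (Equiv.subtypeEquivRight (fun _ => mem_compl)))).trans (Equiv.sumCompl (· ∈ A)))

lemma shuffleOf_castAdd (A : Finset (Fin (a + b))) (hA : #A = a) (hAc : #Aᶜ = b) (i : Fin a) :
    shuffleOf A hA hAc (Fin.castAdd b i) = A.orderEmbOfFin hA i := by
  simp [shuffleOf]

lemma shuffleOf_natAdd (A : Finset (Fin (a + b))) (hA : #A = a) (hAc : #Aᶜ = b) (j : Fin b) :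
    shuffleOf A hA hAc (Fin.natAdd a j) = Aᶜ.orderEmbOfFin hAc j := by
  simp [shuffleOf]

lemma isShuffle_shuffleOf (A : Finset (Fin (a + b))) (hA : #A = a) (hAc : #Aᶜ = b) :
    IsShuffle a b (shuffleOf A hA hAc) := by
  refine isShuffle_iff.2 ⟨?_, ?_⟩
  · convert (A.orderEmbOfFin hA).strictMono using 1
    exact funext (shuffleOf_castAdd A hA hAc)
  · convert (Aᶜ.orderEmbOfFin hAc).strictMono using 1
    exact funext (shuffleOf_natAdd A hA hAc)

lemma exists_isShuffle_mul_mulPerm_eq (π : Perm (Fin (a + b))) :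
    ∃ ζ σ τ, IsShuffle a b ζ ∧ ζ * mulPerm σ τ = π := by
  classical
  have hl : Injective (π ∘ Fin.castAdd b) := π.injective.comp (Fin.castAdd_injective a b)
  have hr : Injective (π ∘ Fin.natAdd a) := π.injective.comp (Fin.natAdd_injective b a)
  set A := univ.image (π ∘ Fin.castAdd b)
  have hA : #A = a := by rw [card_image_of_injective _ hl, card_univ, Fintype.card_fin]
  have hAc : #Aᶜ = b := by rw [card_compl, hA, Fintype.card_fin, Nat.add_sub_cancel_left]
  have hrA : ∀ j, π (Fin.natAdd a j) ∈ Aᶜ := fun j => by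
    simp only [A, mem_compl, mem_image, mem_univ, true_and, comp_apply, π.injective.eq_iff,
      Fin.ext_iff, Fin.val_castAdd, Fin.val_natAdd, not_exists]
    omega
  obtain ⟨σ, hσ⟩ := exists_perm_orderEmbOfFin_eq A hA hl (fun i => mem_image_of_mem _ (mem_univ i))
  obtain ⟨τ, hτ⟩ := exists_perm_orderEmbOfFin_eq Aᶜ hAc hr hrA
  refine ⟨shuffleOf A hA hAc, σ, τ, isShuffle_shuffleOf A hA hAc, Equiv.ext fun x => ?_⟩
  induction x using Fin.addCases with
  | left i => simpa [mulPerm_castAdd, shuffleOf_castAdd] using hσ i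
  | right j => simpa [mulPerm_natAdd, shuffleOf_natAdd] using hτ j

lemma bijective_mul_mulPerm :
    Bijective fun p : Perm (Fin a) × Perm (Fin b) × {ζ // IsShuffle a b ζ} =>
      p.2.2.1 * mulPerm p.1 p.2.1 := by
  refine ⟨fun ⟨σ, τ, ζ, hζ⟩ ⟨σ', τ', ζ', hζ'⟩ h => ?_, fun π => ?_⟩
  · obtain rfl := hζ.eq_of_mul_mulPerm_eq hζ' h
    obtain ⟨rfl, rfl⟩ := mulPerm_injective (mul_left_cancel h)
    rfl
  · obtain ⟨ζ, σ, τ, hζ, rfl⟩ := exists_isShuffle_mul_mulPerm_eq π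
    exact ⟨(σ, τ, ⟨ζ, hζ⟩), rfl⟩

open Classical in
lemma sum_sum_sum_shuffle_mul_mulPerm {M : Type*} [AddCommMonoid M]
    (f : Perm (Fin (a + b)) → M) :
    ∑ σ, ∑ τ, ∑ ζ ∈ univ.filter (fun ζ => IsShuffle a b ζ), f (ζ * mulPerm σ τ) = ∑ π, f π := by
  rw [← Fintype.sum_bijective _ bijective_mul_mulPerm _ f fun _ => rfl]
  simp only [Fintype.sum_prod_type]
  exact sum_congr rfl fun σ _ => sum_congr rfl fun τ _ =>
    sum_subtype _ (fun ζ => by simp) (fun ζ => f (ζ * mulPerm σ τ))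

end Shuffle

lemma Deq_coeff (n : ℕ) (S : Finset ℕ) (π : Perm (Fin n)) :
    (Deq n S).coeff π = if descSet π = S then 1 else 0 := by
  classical
  simp [Deq, MonoidAlgebra.coeff_sum, Finsupp.finsetSum_apply, MonoidAlgebra.coeff_single,
    Finsupp.single_apply]

lemma Deq_add_Deq_insert (n : ℕ) {T : Finset ℕ} {a : ℕ} (ha : a ∉ T) :
    Deq n T + Deq n (insert a T) =
      ∑ π, if (descSet π).erase a = T then MonoidAlgebra.single π (1 : ℚ) else 0 := by
  classical
  have hdisj : Disjoint (univ.filter fun π : Perm (Fin n) => descSet π = T)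
      (univ.filter fun π => descSet π = insert a T) :=
    disjoint_filter.2 fun π _ h h' => ha (h ▸ h' ▸ mem_insert_self a T)
  rw [Deq, Deq, ← sum_union hdisj, ← filter_or, sum_filter]
  simp only [Finset.erase_eq_iff_of_notMem ha]

open Classical in
lemma conv_eq_sum {a b : ℕ} (u : MonoidAlgebra ℚ (Perm (Fin a)))
    (v : MonoidAlgebra ℚ (Perm (Fin b))) :
    conv u v = ∑ σ, ∑ τ, (u.coeff σ * v.coeff τ) •
      ∑ ζ ∈ univ.filter (fun ζ => IsShuffle a b ζ), MonoidAlgebra.single (ζ * mulPerm σ τ) 1 := by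
  rw [conv, sum_subset (subset_univ _) fun σ _ hσ => by
    simp [Finsupp.notMem_support_iff.1 hσ]]
  refine sum_congr rfl fun σ _ => sum_subset (subset_univ _) fun τ _ hτ => ?_
  simp [Finsupp.notMem_support_iff.1 hτ]

open Classical in
lemma conv_Deq_Deq_eq_sum {a b : ℕ} (S₁ S₂ : Finset ℕ) :
    conv (Deq a S₁) (Deq b S₂) =
      ∑ σ, ∑ τ, ∑ ζ ∈ univ.filter (fun ζ => IsShuffle a b ζ),
        if descSet σ = S₁ ∧ descSet τ = S₂ then MonoidAlgebra.single (ζ * mulPerm σ τ) (1 : ℚ)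
        else 0 := by
  rw [conv_eq_sum]
  refine sum_congr rfl fun σ _ => sum_congr rfl fun τ _ => ?_
  rw [smul_sum]
  refine sum_congr rfl fun ζ _ => ?_
  simp only [Deq_coeff, ite_and]
  split_ifs <;> simp

theorem conv_Deq_Deq_general (a b : ℕ)
    (S₁ S₂ : Finset ℕ) (hS₁ : S₁ ⊆ Finset.Icc 1 (a - 1)) (hS₂ : S₂ ⊆ Finset.Icc 1 (b - 1)) :
    conv (Deq a S₁) (Deq b S₂) =
      Deq (a + b) (S₁ ∪ S₂.image (· + a)) +
        Deq (a + b) (S₁ ∪ {a} ∪ S₂.image (· + a)) := by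
  classical
  have hS₁a : ∀ i ∈ S₁, i < a := fun i hi => by have := mem_Icc.1 (hS₁ hi); omega
  have haT : a ∉ S₁ ∪ S₂.image (· + a) := by
    simp only [mem_union, mem_image, not_or, not_exists, not_and]
    exact ⟨fun h => (hS₁a a h).false, fun s hs h => by have := mem_Icc.1 (hS₂ hs); omega⟩
  rw [show S₁ ∪ {a} ∪ S₂.image (· + a) = insert a (S₁ ∪ S₂.image (· + a)) by
      ext; simp only [mem_union, mem_insert, mem_singleton]; tauto,
    Deq_add_Deq_insert _ haT, ← sum_sum_sum_shuffle_mul_mulPerm, conv_Deq_Deq_eq_sum]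
  refine sum_congr rfl fun σ _ => sum_congr rfl fun τ _ => sum_congr rfl fun ζ hζ => ?_
  simp only [erase_descSet_mul_mulPerm (mem_filter.1 hζ).2,
    union_image_add_eq_union_image_add_iff (fun i h => (pos_and_lt_of_mem_descSet h).2) hS₁a]

/-- `D_{=S₁}^{(a)} ⋆ D_{=S₂}^{(b)}
= D_{=S₁ ∪ (S₂+a)}^{(a+b)} + D_{=S₁ ∪ {a} ∪ (S₂+a)}^{(a+b)}`. -/
theorem conv_Deq_Deq (a b : ℕ) (ha : 1 ≤ a) (hb : 1 ≤ b)
    (S₁ S₂ : Finset ℕ) (hS₁ : S₁ ⊆ Finset.Icc 1 (a - 1)) (hS₂ : S₂ ⊆ Finset.Icc 1 (b - 1)) :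
    conv (Deq a S₁) (Deq b S₂) =
      Deq (a + b) (S₁ ∪ S₂.image (· + a)) +
        Deq (a + b) (S₁ ∪ {a} ∪ S₂.image (· + a)) :=
  conv_Deq_Deq_general a b S₁ S₂ hS₁ hS₂
end
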